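/- arXiv:math/0212077 — 4 statements merged into one kernel-verified Lean document; each statement's English description precedes it below -/
import Mathlib

section
/- Let f be a C³ probability density with support (0,∞), and suppose there exist c > 0 and ε₀ > 0 such that the integrals ∫_c^∞ f^{-1}(f')² dx, ∫_c^∞ sup_{0≤t₁≤ε₀} f(x+t₁) sup_{0≤t₂≤ε₀} |f^{-3}(f')³(x+t₂)| dx, ∫_c^∞ sup_{0≤t₁≤ε₀} f(x+t₁) sup_{0≤t₂≤ε₀}|f^{-2} f' f''(x+t₂)| dx, and ∫_c^∞ sup_{0≤t₁≤ε₀} f(x+t₁) sup_{0≤t₂≤ε₀}|f^{-1}f'''(x+t₂)| dx are all finite. Define I⁺_s(c,f,ε) := ∫_c^∞ f(x)^{1-s} f(x+ε)^s dx − ∫_c^∞ f(x) dx + f(c)sε + (s/2)f'(c)ε². Then lim_{ε→+0} I⁺_s(c,f,ε)/ε² = −(s(1-s)/2)·∫_c^∞ f(x)^{-1} f'(x)² dx, uniformly for s ∈ (0,1). -/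
/-!
Fix `x > c` and `s ∈ [0, 1]`. Taylor's formula for `y ↦ f(x)^(1-s) f(y)^s` between `x` and
`x + ε` gives `f + ε s f' + ε²/2 (s(s-1) f'²/f + s f'')` at `x`, with remainder at most `ε³/2`
times the supremum of the third derivative on `[x, x + ε₀]`. Written as `f(x)^(1-s) f(y)^s` times a
combination of `f⁻³f'³`, `f⁻²f'f''`, `f⁻¹f'''` whose coefficients are bounded uniformly in `s`, and
with `f(x)^(1-s) f(y)^s ≤ sup f` by weighted AM–GM, that third derivative is dominated by an
integrable function of `x` independent of `s` and `ε`.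

Integrating over `(c, ∞)`, the first- and second-order terms are handled by
`∫ f' = -f(c)` and `∫ f'' = -f'(c)`: `f` and `f'` are integrable, hence vanish at infinity
(`|f'| ≤ (f + f'²/f)/2`, and `f''` is integrable by the case `s = 1` of the expansion). What is left
is `ε² · (-s(1-s)/2) ∫ f'²/f` up to an error `O(ε³)` uniform in `s`.
-/

open MeasureTheory Real Filter Set Topology

theorem IsCompact.le_biSup_of_continuousOn {α β : Type*} [TopologicalSpace β]
    [ConditionallyCompleteLinearOrder α] [TopologicalSpace α] [ClosedIciTopology α]
    {φ : β → α} {K : Set β} (hK : IsCompact K) (hφ : ContinuousOn φ K) {t : β} (ht : t ∈ K) :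
    φ t ≤ ⨆ t ∈ K, φ t := by
  refine le_ciSup₂ (f := fun t (_ : t ∈ K) => φ t) ((hK.bddAbove_image hφ).mono ?_) t ht
  rintro _ ⟨_, ⟨t, rfl⟩, ⟨ht, rfl⟩⟩
  exact mem_image_of_mem φ ht

theorem abs_taylor_two_remainder_le {g g₁ g₂ g₃ : ℝ → ℝ} {a b C : ℝ} (hab : a ≤ b)
    (hg : ∀ t ∈ Icc a b, HasDerivAt g (g₁ t) t) (hg₁ : ∀ t ∈ Icc a b, HasDerivAt g₁ (g₂ t) t)
    (hg₂ : ∀ t ∈ Icc a b, HasDerivAt g₂ (g₃ t) t) (hg₃ : ContinuousOn g₃ (Icc a b))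
    (hC : ∀ t ∈ Icc a b, |g₃ t| ≤ C) :
    |g b - g a - (b - a) * g₁ a - (b - a) ^ 2 / 2 * g₂ a| ≤ (b - a) ^ 3 / 2 * C := by
  have hderiv : ∀ t ∈ uIcc a b, HasDerivAt
      (fun t => g t + (b - t) * g₁ t + (b - t) ^ 2 / 2 * g₂ t) ((b - t) ^ 2 / 2 * g₃ t) t := by
    intro t ht
    rw [uIcc_of_le hab] at ht
    have hlin : HasDerivAt (fun u : ℝ => b - u) (-1) t := by
      simpa using (hasDerivAt_id t).const_sub b
    refine ((hg t ht).add (hlin.mul (hg₁ t ht))).add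
      (((hlin.pow 2).div_const 2).mul (hg₂ t ht)) |>.congr_deriv ?_
    simp only [Pi.pow_apply]
    ring
  have hint : IntervalIntegrable (fun t => (b - t) ^ 2 / 2 * g₃ t) volume a b := by
    refine ContinuousOn.intervalIntegrable ?_
    rw [uIcc_of_le hab]
    exact (by fun_prop : Continuous fun t : ℝ => (b - t) ^ 2 / 2).continuousOn.mul hg₃
  have hrem : g b - g a - (b - a) * g₁ a - (b - a) ^ 2 / 2 * g₂ a
      = ∫ t in a..b, (b - t) ^ 2 / 2 * g₃ t := by
    rw [intervalIntegral.integral_eq_sub_of_hasDerivAt hderiv hint]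
    ring
  have hbound : ∀ t ∈ uIoc a b, ‖(b - t) ^ 2 / 2 * g₃ t‖ ≤ (b - a) ^ 2 / 2 * C := by
    intro t ht
    rw [uIoc_of_le hab] at ht
    rw [norm_mul, norm_of_nonneg (by positivity), Real.norm_eq_abs]
    have hsq : (b - t) ^ 2 ≤ (b - a) ^ 2 := by nlinarith [ht.1, ht.2]
    exact mul_le_mul (by linarith) (hC t (Ioc_subset_Icc_self ht)) (abs_nonneg _)
      (by positivity)
  calc |g b - g a - (b - a) * g₁ a - (b - a) ^ 2 / 2 * g₂ a|
      ≤ (b - a) ^ 2 / 2 * C * |b - a| := by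
        rw [hrem]; exact intervalIntegral.norm_integral_le_of_norm_le_const hbound
    _ = (b - a) ^ 3 / 2 * C := by rw [abs_of_nonneg (sub_nonneg.2 hab)]; ring

section RpowDeriv

variable {u u₁ u₂ P : ℝ → ℝ} {u₃ P' s y : ℝ}

theorem HasDerivAt.rpow_const_mul_of_pos (hu : HasDerivAt u (u₁ y) y) (hy : 0 < u y)
    (hP : HasDerivAt P P' y) :
    HasDerivAt (fun y => u y ^ s * P y) (u y ^ s * (s * (u y)⁻¹ * u₁ y * P y + P')) y := by
  refine (hu.rpow_const (p := s) (Or.inl hy.ne')).mul hP |>.congr_deriv ?_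
  rw [rpow_sub_one hy.ne']
  ring

theorem HasDerivAt.rpow_const_of_pos (hu : HasDerivAt u (u₁ y) y) (hy : 0 < u y) :
    HasDerivAt (fun y => u y ^ s) (u y ^ s * (s * (u y)⁻¹ * u₁ y)) y := by
  simpa using hu.rpow_const_mul_of_pos (s := s) hy (hasDerivAt_const y 1)

theorem HasDerivAt.rpow_const_deriv_of_pos (hu : HasDerivAt u (u₁ y) y)
    (hu₁ : HasDerivAt u₁ (u₂ y) y) (hy : 0 < u y) :
    HasDerivAt (fun y => u y ^ s * (s * (u y)⁻¹ * u₁ y))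
      (u y ^ s * (s * ((s - 1) * (u y)⁻¹ ^ 2 * u₁ y ^ 2 + (u y)⁻¹ * u₂ y))) y := by
  refine hu.rpow_const_mul_of_pos hy (((hu.inv hy.ne').const_mul s).mul hu₁) |>.congr_deriv ?_
  simp only [Pi.mul_apply, Pi.inv_apply]
  ring

theorem HasDerivAt.rpow_const_deriv_two_of_pos (hu : HasDerivAt u (u₁ y) y)
    (hu₁ : HasDerivAt u₁ (u₂ y) y) (hu₂ : HasDerivAt u₂ u₃ y) (hy : 0 < u y) :
    HasDerivAt (fun y => u y ^ s * (s * ((s - 1) * (u y)⁻¹ ^ 2 * u₁ y ^ 2 + (u y)⁻¹ * u₂ y)))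
      (u y ^ s * (s * ((s - 1) * (s - 2) * ((u y)⁻¹ ^ 3 * u₁ y ^ 3)
        + 3 * (s - 1) * ((u y)⁻¹ ^ 2 * u₁ y * u₂ y) + (u y)⁻¹ * u₃))) y := by
  have hinv := hu.inv hy.ne'
  refine hu.rpow_const_mul_of_pos hy
    (((((hinv.pow 2).const_mul (s - 1)).mul (hu₁.pow 2)).add (hinv.mul hu₂)).const_mul s)
    |>.congr_deriv ?_
  simp only [Pi.add_apply, Pi.mul_apply, Pi.inv_apply, Pi.pow_apply]
  ring

end RpowDeriv

theorem rpow_mul_rpow_le_of_le {a b M s : ℝ} (ha : 0 ≤ a) (hb : 0 ≤ b) (hs : s ∈ Icc (0 : ℝ) 1)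
    (haM : a ≤ M) (hbM : b ≤ M) : a ^ (1 - s) * b ^ s ≤ M := by
  calc a ^ (1 - s) * b ^ s ≤ (1 - s) * a + s * b :=
        geom_mean_le_arith_mean2_weighted (by linarith [hs.2]) hs.1 ha hb (by ring)
    _ ≤ (1 - s) * M + s * M := by gcongr <;> linarith [hs.1, hs.2]
    _ = M := by ring

theorem abs_rpow_deriv_three_coeff_le {s X₁ X₂ X₃ : ℝ} (hs : s ∈ Icc (0 : ℝ) 1) :
    |s * ((s - 1) * (s - 2) * X₁ + 3 * (s - 1) * X₂ + X₃)| ≤ 2 * |X₁| + 3 * |X₂| + |X₃| := by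
  obtain ⟨hs₀, hs₁⟩ := hs
  have h₁ : |s * ((s - 1) * (s - 2))| ≤ 2 := by
    rw [abs_le]; constructor <;> nlinarith [mul_nonneg hs₀ (sub_nonneg.2 hs₁)]
  have h₂ : |s * (3 * (s - 1))| ≤ 3 := by
    rw [abs_le]; constructor <;> nlinarith [mul_nonneg hs₀ (sub_nonneg.2 hs₁)]
  have h₃ : |s| ≤ 1 := by rw [abs_le]; constructor <;> linarith
  calc |s * ((s - 1) * (s - 2) * X₁ + 3 * (s - 1) * X₂ + X₃)|
      = |s * ((s - 1) * (s - 2)) * X₁ + s * (3 * (s - 1)) * X₂ + s * X₃| := by congr 1; ring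
    _ ≤ |s * ((s - 1) * (s - 2))| * |X₁| + |s * (3 * (s - 1))| * |X₂| + |s| * |X₃| := by
        rw [← abs_mul, ← abs_mul, ← abs_mul]; exact abs_add_three _ _ _
    _ ≤ 2 * |X₁| + 3 * |X₂| + 1 * |X₃| := by gcongr
    _ = 2 * |X₁| + 3 * |X₂| + |X₃| := by ring

theorem integral_Ioi_eq_neg_of_hasDerivAt {g g' : ℝ → ℝ} {a : ℝ}
    (hcont : ContinuousWithinAt g (Ici a) a) (hderiv : ∀ x ∈ Ioi a, HasDerivAt g (g' x) x)
    (hg' : IntegrableOn g' (Ioi a)) (hg : IntegrableOn g (Ioi a)) :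
    ∫ x in Ioi a, g' x = -g a := by
  simpa using integral_Ioi_of_hasDerivAt_of_tendsto hcont hderiv hg'
    (tendsto_zero_of_hasDerivAt_of_integrableOn_Ioi hderiv hg' hg)

theorem abs_le_add_inv_mul_sq_div_two {a b : ℝ} (ha : 0 < a) :
    |b| ≤ (a + a⁻¹ * b ^ 2) / 2 := by
  have hsq : (a + a⁻¹ * b ^ 2) / 2 - |b| = (a - |b|) ^ 2 / (2 * a) := by
    field_simp
    rw [← sq_abs b]
    ring
  linarith [show 0 ≤ (a - |b|) ^ 2 / (2 * a) by positivity]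

theorem Integrable.of_inv_mul_sq {α : Type*} [MeasurableSpace α] {μ : Measure α}
    {f g : α → ℝ} (hf : Integrable f μ) (hfg : Integrable (fun x => (f x)⁻¹ * g x ^ 2) μ)
    (hg : AEStronglyMeasurable g μ) (hpos : ∀ᵐ x ∂μ, 0 < f x) : Integrable g μ :=
  ((hf.add hfg).div_const 2).mono' hg <| hpos.mono fun _ hx => abs_le_add_inv_mul_sq_div_two hx

theorem tendstoUniformlyOn_div_sq_of_abs_sub_le {ι : Type*} {F : ℝ → ι → ℝ} {G : ι → ℝ}
    {S : Set ι} {K ε₀ : ℝ} (hε₀ : 0 < ε₀)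
    (h : ∀ ε ∈ Ioc 0 ε₀, ∀ s ∈ S, |F ε s - ε ^ 2 * G s| ≤ K * ε ^ 3) :
    TendstoUniformlyOn (fun ε s => F ε s / ε ^ 2) G (𝓝[>] 0) S := by
  rw [Metric.tendstoUniformlyOn_iff]
  intro δ hδ
  have hK : 0 < |K| + 1 := by positivity
  filter_upwards [Ioo_mem_nhdsGT (lt_min hε₀ (div_pos hδ hK))] with ε ⟨hε, hεm⟩ s hs
  have hε₂ : 0 < ε ^ 2 := by positivity
  have hKε : |K| * ε < δ := by
    have := (lt_div_iff₀ hK).1 (hεm.trans_le (min_le_right _ _))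
    nlinarith
  rw [dist_comm, Real.dist_eq, show F ε s / ε ^ 2 - G s = (F ε s - ε ^ 2 * G s) / ε ^ 2 by
    field_simp, abs_div, abs_of_pos hε₂, div_lt_iff₀ hε₂]
  calc |F ε s - ε ^ 2 * G s| ≤ K * ε ^ 3 := h ε ⟨hε, hεm.le.trans (min_le_left _ _)⟩ s hs
    _ ≤ |K| * ε * ε ^ 2 := by
        rw [mul_assoc, ← pow_succ']; gcongr; exact le_abs_self K
    _ < δ * ε ^ 2 := by gcongr

section ContDiffThree

variable {f : ℝ → ℝ} {U : Set ℝ}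

theorem ContDiffOn.hasDerivAt_of_isOpen {n : WithTop ℕ∞} (hf : ContDiffOn ℝ n f U)
    (hU : IsOpen U) (hn : n ≠ 0) {y : ℝ} (hy : y ∈ U) : HasDerivAt f (deriv f y) y :=
  ((hf.differentiableOn hn).differentiableAt (hU.mem_nhds hy)).hasDerivAt

theorem ContDiffOn.hasDerivAt_iterate_deriv_of_isOpen (hf : ContDiffOn ℝ 3 f U)
    (hU : IsOpen U) {y : ℝ} (hy : y ∈ U) :
    HasDerivAt f (deriv f y) y ∧ HasDerivAt (deriv f) (deriv (deriv f) y) y ∧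
      HasDerivAt (deriv (deriv f)) (deriv (deriv (deriv f)) y) y :=
  have hf₁ := hf.deriv_of_isOpen hU (m := 2) (by norm_num)
  ⟨hf.hasDerivAt_of_isOpen hU (by simp) hy, hf₁.hasDerivAt_of_isOpen hU (by simp) hy,
    (hf₁.deriv_of_isOpen hU (m := 1) (by norm_num)).hasDerivAt_of_isOpen hU one_ne_zero hy⟩

theorem ContDiffOn.continuousOn_iterate_deriv_of_isOpen (hf : ContDiffOn ℝ 3 f U)
    (hU : IsOpen U) :
    ContinuousOn (deriv f) U ∧ ContinuousOn (deriv (deriv f)) U ∧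
      ContinuousOn (deriv (deriv (deriv f))) U :=
  have hf₁ := hf.deriv_of_isOpen hU (m := 2) (by norm_num)
  have hf₂ := hf₁.deriv_of_isOpen hU (m := 1) (by norm_num)
  ⟨hf₁.continuousOn, hf₂.continuousOn, hf₂.continuousOn_deriv_of_isOpen hU le_rfl⟩

end ContDiffThree

noncomputable def shiftSup (φ : ℝ → ℝ) (ε₀ x : ℝ) : ℝ := ⨆ t ∈ Icc (0 : ℝ) ε₀, φ (x + t)

theorem le_shiftSup {φ : ℝ → ℝ} {ε₀ x t : ℝ} (hφ : ContinuousOn φ (Icc x (x + ε₀)))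
    (ht : t ∈ Icc x (x + ε₀)) : φ t ≤ shiftSup φ ε₀ x := by
  have hmaps : MapsTo (x + ·) (Icc 0 ε₀) (Icc x (x + ε₀)) :=
    fun r hr => ⟨by linarith [hr.1], by linarith [hr.2]⟩
  simpa [shiftSup] using isCompact_Icc.le_biSup_of_continuousOn (hφ.comp (by fun_prop) hmaps)
    (t := t - x) ⟨by linarith [ht.1], by linarith [ht.2]⟩

noncomputable def renyiMajorant (f : ℝ → ℝ) (ε₀ x : ℝ) : ℝ :=
  shiftSup f ε₀ x * (2 * shiftSup (fun y => |(f y)⁻¹ ^ 3 * deriv f y ^ 3|) ε₀ x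
    + 3 * shiftSup (fun y => |(f y)⁻¹ ^ 2 * deriv f y * deriv (deriv f) y|) ε₀ x
    + shiftSup (fun y => |(f y)⁻¹ * deriv (deriv (deriv f)) y|) ε₀ x)

noncomputable def renyiRemainder (f : ℝ → ℝ) (s ε x : ℝ) : ℝ :=
  f x ^ (1 - s) * f (x + ε) ^ s - f x - ε * (s * deriv f x)
    - ε ^ 2 / 2 * (s * (s - 1) * ((f x)⁻¹ * deriv f x ^ 2) + s * deriv (deriv f) x)

noncomputable def renyiThirdDeriv (f : ℝ → ℝ) (s x y : ℝ) : ℝ :=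
  f x ^ (1 - s) * (f y ^ s * (s * ((s - 1) * (s - 2) * ((f y)⁻¹ ^ 3 * deriv f y ^ 3)
    + 3 * (s - 1) * ((f y)⁻¹ ^ 2 * deriv f y * deriv (deriv f) y)
    + (f y)⁻¹ * deriv (deriv (deriv f)) y)))

section Density

variable {f : ℝ → ℝ} {s ε ε₀ x y c : ℝ} {K : Set ℝ}

theorem continuousOn_renyi_terms (hf : ContDiffOn ℝ 3 f (Ioi 0)) (hpos : ∀ x > 0, 0 < f x)
    (hK : K ⊆ Ioi 0) :
    ContinuousOn (fun y => (f y)⁻¹ ^ 3 * deriv f y ^ 3) K ∧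
      ContinuousOn (fun y => (f y)⁻¹ ^ 2 * deriv f y * deriv (deriv f) y) K ∧
      ContinuousOn (fun y => (f y)⁻¹ * deriv (deriv (deriv f)) y) K := by
  obtain ⟨h₁, h₂, h₃⟩ := hf.continuousOn_iterate_deriv_of_isOpen isOpen_Ioi
  have hinv : ContinuousOn (fun y => (f y)⁻¹) K :=
    (hf.continuousOn.mono hK).inv₀ fun y hy => (hpos y (hK hy)).ne'
  exact ⟨(hinv.pow 3).mul ((h₁.mono hK).pow 3), ((hinv.pow 2).mul (h₁.mono hK)).mul (h₂.mono hK),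
    hinv.mul (h₃.mono hK)⟩

theorem continuousOn_renyiThirdDeriv (hf : ContDiffOn ℝ 3 f (Ioi 0)) (hpos : ∀ x > 0, 0 < f x)
    (hs : 0 ≤ s) (hK : K ⊆ Ioi 0) : ContinuousOn (renyiThirdDeriv f s x) K := by
  obtain ⟨h₁, h₂, h₃⟩ := continuousOn_renyi_terms hf hpos hK
  exact continuousOn_const.mul (((hf.continuousOn.mono hK).rpow_const fun _ _ => Or.inr hs).mul
    (continuousOn_const.mul (((continuousOn_const.mul h₁).add (continuousOn_const.mul h₂)).add h₃)))

theorem abs_renyiThirdDeriv_le (hf : ContDiffOn ℝ 3 f (Ioi 0)) (hpos : ∀ x > 0, 0 < f x)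
    (hs : s ∈ Icc (0 : ℝ) 1) (hx : 0 < x) (hy : y ∈ Icc x (x + ε₀)) :
    |renyiThirdDeriv f s x y| ≤ renyiMajorant f ε₀ x := by
  have hsub : Icc x (x + ε₀) ⊆ Ioi 0 := fun z hz => hx.trans_le hz.1
  have hfc : ContinuousOn f (Icc x (x + ε₀)) := hf.continuousOn.mono hsub
  obtain ⟨h₁, h₂, h₃⟩ := continuousOn_renyi_terms hf hpos hsub
  have hnn : 0 ≤ f x ^ (1 - s) * f y ^ s :=
    mul_nonneg (rpow_nonneg (hpos x hx).le _) (rpow_nonneg (hpos y (hsub hy)).le _)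
  have hS : f x ^ (1 - s) * f y ^ s ≤ shiftSup f ε₀ x :=
    rpow_mul_rpow_le_of_le (hpos x hx).le (hpos y (hsub hy)).le hs
      (le_shiftSup hfc ⟨le_rfl, hy.1.trans hy.2⟩) (le_shiftSup hfc hy)
  rw [renyiThirdDeriv, ← mul_assoc, abs_mul, abs_of_nonneg hnn]
  refine mul_le_mul hS ((abs_rpow_deriv_three_coeff_le hs).trans ?_) (abs_nonneg _) (hnn.trans hS)
  gcongr
  exacts [le_shiftSup h₁.abs hy, le_shiftSup h₂.abs hy, le_shiftSup h₃.abs hy]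

theorem abs_renyiRemainder_le (hf : ContDiffOn ℝ 3 f (Ioi 0)) (hpos : ∀ x > 0, 0 < f x)
    (hs : s ∈ Icc (0 : ℝ) 1) (hx : 0 < x) (hε : 0 ≤ ε) (hεε₀ : ε ≤ ε₀) :
    |renyiRemainder f s ε x| ≤ ε ^ 3 / 2 * renyiMajorant f ε₀ x := by
  have hsub : Icc x (x + ε) ⊆ Ioi 0 := fun z hz => hx.trans_le hz.1
  have hd := fun y (hy : y ∈ Icc x (x + ε)) =>
    hf.hasDerivAt_iterate_deriv_of_isOpen isOpen_Ioi (hsub hy)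
  have htaylor := abs_taylor_two_remainder_le (le_add_of_nonneg_right hε)
    (g := fun y => f x ^ (1 - s) * f y ^ s)
    (fun y hy => ((hd y hy).1.rpow_const_of_pos (hpos y (hsub hy))).const_mul _)
    (fun y hy => ((hd y hy).1.rpow_const_deriv_of_pos (hd y hy).2.1
      (hpos y (hsub hy))).const_mul _)
    (fun y hy => ((hd y hy).1.rpow_const_deriv_two_of_pos (hd y hy).2.1 (hd y hy).2.2
      (hpos y (hsub hy))).const_mul _)
    (continuousOn_renyiThirdDeriv hf hpos hs.1 hsub)
    (fun y hy => abs_renyiThirdDeriv_le hf hpos hs hx ⟨hy.1, hy.2.trans (by linarith)⟩)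
  have hfx := hpos x hx
  have hrpow : f x ^ (1 - s) * f x ^ s = f x := by rw [← rpow_add hfx]; simp
  rw [add_sub_cancel_left] at htaylor
  convert htaylor using 2
  simp only [renyiRemainder, ← mul_assoc (f x ^ (1 - s)) (f x ^ s), hrpow]
  field_simp

theorem continuousOn_renyiRemainder (hf : ContDiffOn ℝ 3 f (Ioi 0)) (hpos : ∀ x > 0, 0 < f x)
    (hs : 0 ≤ s) (hε : 0 ≤ ε) : ContinuousOn (renyiRemainder f s ε) (Ioi 0) := by
  have hfc := hf.continuousOn
  obtain ⟨h₁, h₂, -⟩ := hf.continuousOn_iterate_deriv_of_isOpen isOpen_Ioi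
  have hne : ∀ x ∈ Ioi (0 : ℝ), f x ≠ 0 := fun x hx => (hpos x hx).ne'
  have hshift : ContinuousOn (fun x => f (x + ε)) (Ioi 0) :=
    hfc.comp (by fun_prop) fun x (hx : 0 < x) => show 0 < x + ε by linarith
  exact ((((hfc.rpow_const fun x hx => Or.inl (hne x hx)).mul
    (hshift.rpow_const fun _ _ => Or.inr hs)).sub hfc).sub
    (continuousOn_const.mul (continuousOn_const.mul h₁))).sub
    (continuousOn_const.mul ((continuousOn_const.mul ((hfc.inv₀ hne).mul (h₁.pow 2))).add
      (continuousOn_const.mul h₂)))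

theorem integrableOn_renyiRemainder (hf : ContDiffOn ℝ 3 f (Ioi 0)) (hpos : ∀ x > 0, 0 < f x)
    (hc : 0 ≤ c) (hs : s ∈ Icc (0 : ℝ) 1) (hε : 0 ≤ ε) (hεε₀ : ε ≤ ε₀)
    (hM : IntegrableOn (renyiMajorant f ε₀) (Ioi c)) :
    IntegrableOn (renyiRemainder f s ε) (Ioi c) :=
  (hM.const_mul (ε ^ 3 / 2)).mono'
    (((continuousOn_renyiRemainder hf hpos hs.1 hε).mono (Ioi_subset_Ioi hc)).aestronglyMeasurable
      measurableSet_Ioi)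
    ((ae_restrict_iff' measurableSet_Ioi).2 <| .of_forall fun x (hx : c < x) =>
      abs_renyiRemainder_le hf hpos hs (hc.trans_lt hx) hε hεε₀)

theorem integrableOn_deriv_deriv (hf : ContDiffOn ℝ 3 f (Ioi 0)) (hpos : ∀ x > 0, 0 < f x)
    (hc : 0 ≤ c) (hε₀ : 0 < ε₀) (hfi : Integrable f) (h₁ : IntegrableOn (deriv f) (Ioi c))
    (hM : IntegrableOn (renyiMajorant f ε₀) (Ioi c)) :
    IntegrableOn (deriv (deriv f)) (Ioi c) := by
  -- at `s = 1` the remainder is the plain Taylor remainder of `f`, which solves for `f''`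
  have hR := integrableOn_renyiRemainder hf hpos hc (s := 1) ⟨zero_le_one, le_rfl⟩ hε₀.le le_rfl hM
  have hshift : IntegrableOn (fun x => f (x + ε₀)) (Ioi c) := (hfi.comp_add_right ε₀).integrableOn
  refine IntegrableOn.congr_fun
    ((((hshift.sub hfi.integrableOn).sub (h₁.const_mul ε₀)).sub hR).const_mul (2 / ε₀ ^ 2))
    (fun x _ => ?_) measurableSet_Ioi
  simp only [renyiRemainder, Pi.sub_apply, sub_self, rpow_zero, rpow_one]
  field_simp
  ring

theorem abs_renyi_integral_sub_le (hf : ContDiffOn ℝ 3 f (Ioi 0)) (hpos : ∀ x > 0, 0 < f x)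
    (hc : 0 < c) (hε₀ : 0 < ε₀) (hfi : Integrable f)
    (hfisher : IntegrableOn (fun x => (f x)⁻¹ * deriv f x ^ 2) (Ioi c))
    (hM : IntegrableOn (renyiMajorant f ε₀) (Ioi c))
    (hs : s ∈ Icc (0 : ℝ) 1) (hε : 0 ≤ ε) (hεε₀ : ε ≤ ε₀) :
    |(∫ x in Ioi c, f x ^ (1 - s) * f (x + ε) ^ s) - (∫ x in Ioi c, f x)
        + f c * s * ε + s / 2 * deriv f c * ε ^ 2
        - ε ^ 2 * (-(s * (1 - s) / 2) * ∫ x in Ioi c, (f x)⁻¹ * deriv f x ^ 2)|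
      ≤ (∫ x in Ioi c, renyiMajorant f ε₀ x) / 2 * ε ^ 3 := by
  have h₀ : IntegrableOn f (Ioi c) := hfi.integrableOn
  have h₁ : IntegrableOn (deriv f) (Ioi c) :=
    Integrable.of_inv_mul_sq h₀ hfisher (measurable_deriv f).aestronglyMeasurable
      ((ae_restrict_iff' measurableSet_Ioi).2 <| .of_forall fun x (hx : c < x) =>
        hpos x (hc.trans hx))
  have h₂ := integrableOn_deriv_deriv hf hpos hc.le hε₀ hfi h₁ hM
  have hR := integrableOn_renyiRemainder hf hpos hc.le hs hε hεε₀ hM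
  have hd := fun x (hx : x ∈ Ioi c) => hf.hasDerivAt_iterate_deriv_of_isOpen isOpen_Ioi
    (hc.trans hx)
  have hdc := hf.hasDerivAt_iterate_deriv_of_isOpen isOpen_Ioi hc
  have hI₁ : ∫ x in Ioi c, deriv f x = -f c := integral_Ioi_eq_neg_of_hasDerivAt
    hdc.1.continuousAt.continuousWithinAt (fun x hx => (hd x hx).1) h₁ h₀
  have hI₂ : ∫ x in Ioi c, deriv (deriv f) x = -deriv f c := integral_Ioi_eq_neg_of_hasDerivAt
    hdc.2.1.continuousAt.continuousWithinAt (fun x hx => (hd x hx).2.1) h₂ h₁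
  have hexpand : ∀ x, f x ^ (1 - s) * f (x + ε) ^ s = renyiRemainder f s ε x + f x
      + ε * s * deriv f x + ε ^ 2 / 2 * (s * (s - 1)) * ((f x)⁻¹ * deriv f x ^ 2)
      + ε ^ 2 / 2 * s * deriv (deriv f) x := fun x => by rw [renyiRemainder]; ring
  have hi₁ : IntegrableOn (fun x => renyiRemainder f s ε x + f x) (Ioi c) := hR.add h₀
  have hi₂ : IntegrableOn (fun x => renyiRemainder f s ε x + f x + ε * s * deriv f x) (Ioi c) :=
    hi₁.add (h₁.const_mul _)
  have hi₃ : IntegrableOn (fun x => renyiRemainder f s ε x + f x + ε * s * deriv f x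
      + ε ^ 2 / 2 * (s * (s - 1)) * ((f x)⁻¹ * deriv f x ^ 2)) (Ioi c) :=
    hi₂.add (hfisher.const_mul _)
  simp_rw [hexpand]
  rw [integral_add hi₃ (h₂.const_mul _), integral_add hi₂ (hfisher.const_mul _),
    integral_add hi₁ (h₁.const_mul _), integral_add hR h₀, integral_const_mul,
    integral_const_mul, integral_const_mul, hI₁, hI₂]
  calc _ = |∫ x in Ioi c, renyiRemainder f s ε x| := by congr 1; ring
    _ ≤ ∫ x in Ioi c, |renyiRemainder f s ε x| := abs_integral_le_integral_abs
    _ ≤ ∫ x in Ioi c, ε ^ 3 / 2 * renyiMajorant f ε₀ x :=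
        setIntegral_mono_on hR.abs (hM.const_mul _) measurableSet_Ioi fun x (hx : c < x) =>
          abs_renyiRemainder_le hf hpos hs (hc.trans hx) hε hεε₀
    _ = (∫ x in Ioi c, renyiMajorant f ε₀ x) / 2 * ε ^ 3 := by rw [integral_const_mul]; ring

theorem integrableOn_renyiMajorant {K : Set ℝ}
    (h₁ : IntegrableOn (fun x => shiftSup f ε₀ x *
      shiftSup (fun y => |(f y)⁻¹ ^ 3 * deriv f y ^ 3|) ε₀ x) K)
    (h₂ : IntegrableOn (fun x => shiftSup f ε₀ x *
      shiftSup (fun y => |(f y)⁻¹ ^ 2 * deriv f y * deriv (deriv f) y|) ε₀ x) K)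
    (h₃ : IntegrableOn (fun x => shiftSup f ε₀ x *
      shiftSup (fun y => |(f y)⁻¹ * deriv (deriv (deriv f)) y|) ε₀ x) K) :
    IntegrableOn (renyiMajorant f ε₀) K :=
  (((h₁.const_mul 2).add (h₂.const_mul 3)).add h₃).congr <| ae_of_all _ fun x => by
    simp only [renyiMajorant, Pi.add_apply]
    ring

end Density

theorem tail_estimate_halfline_general (f : ℝ → ℝ) (c ε₀ : ℝ) (hc : 0 < c) (hε₀ : 0 < ε₀)
    (hf3 : ContDiffOn ℝ 3 f (Set.Ioi 0))
    (hpos : ∀ x > (0:ℝ), 0 < f x)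
    (hdens : ∫ x, f x = 1)
    (h1 : IntegrableOn (fun x => (f x)⁻¹ * (deriv f x) ^ 2) (Set.Ioi c))
    (h2 : IntegrableOn (fun x =>
      (⨆ t₁ ∈ Set.Icc (0:ℝ) ε₀, f (x + t₁)) *
      (⨆ t₂ ∈ Set.Icc (0:ℝ) ε₀, |(f (x + t₂))⁻¹ ^ 3 * (deriv f (x + t₂)) ^ 3|))
      (Set.Ioi c))
    (h3 : IntegrableOn (fun x =>
      (⨆ t₁ ∈ Set.Icc (0:ℝ) ε₀, f (x + t₁)) *
      (⨆ t₂ ∈ Set.Icc (0:ℝ) ε₀,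
        |(f (x + t₂))⁻¹ ^ 2 * deriv f (x + t₂) * deriv (deriv f) (x + t₂)|))
      (Set.Ioi c))
    (h4 : IntegrableOn (fun x =>
      (⨆ t₁ ∈ Set.Icc (0:ℝ) ε₀, f (x + t₁)) *
      (⨆ t₂ ∈ Set.Icc (0:ℝ) ε₀,
        |(f (x + t₂))⁻¹ * deriv (deriv (deriv f)) (x + t₂)|))
      (Set.Ioi c)) :
    TendstoUniformlyOn
      (fun ε s =>
        ((∫ x in Set.Ioi c, f x ^ (1 - s) * f (x + ε) ^ s)
          - (∫ x in Set.Ioi c, f x)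
          + f c * s * ε + s / 2 * deriv f c * ε ^ 2) / ε ^ 2)
      (fun s => -(s * (1 - s) / 2) * ∫ x in Set.Ioi c, (f x)⁻¹ * (deriv f x) ^ 2)
      (nhdsWithin 0 (Set.Ioi 0)) (Set.Ioo 0 1) := by
  have hfi : Integrable f := .of_integral_ne_zero (by rw [hdens]; exact one_ne_zero)
  have hM := integrableOn_renyiMajorant h2 h3 h4
  exact tendstoUniformlyOn_div_sq_of_abs_sub_le hε₀ fun ε hε s hs =>
    abs_renyi_integral_sub_le hf3 hpos hc hε₀ hfi h1 hM (Ioo_subset_Icc_self hs) hε.1.le hε.2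

theorem tail_estimate_halfline (f : ℝ → ℝ) (c ε₀ : ℝ) (hc : 0 < c) (hε₀ : 0 < ε₀)
    (hf3 : ContDiffOn ℝ 3 f (Set.Ioi 0))
    (hsupp : ∀ x ≤ (0:ℝ), f x = 0) (hpos : ∀ x > (0:ℝ), 0 < f x)
    (hdens : ∫ x, f x = 1)
    (h1 : IntegrableOn (fun x => (f x)⁻¹ * (deriv f x) ^ 2) (Set.Ioi c))
    (h2 : IntegrableOn (fun x =>
      (⨆ t₁ ∈ Set.Icc (0:ℝ) ε₀, f (x + t₁)) *
      (⨆ t₂ ∈ Set.Icc (0:ℝ) ε₀, |(f (x + t₂))⁻¹ ^ 3 * (deriv f (x + t₂)) ^ 3|))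
      (Set.Ioi c))
    (h3 : IntegrableOn (fun x =>
      (⨆ t₁ ∈ Set.Icc (0:ℝ) ε₀, f (x + t₁)) *
      (⨆ t₂ ∈ Set.Icc (0:ℝ) ε₀,
        |(f (x + t₂))⁻¹ ^ 2 * deriv f (x + t₂) * deriv (deriv f) (x + t₂)|))
      (Set.Ioi c))
    (h4 : IntegrableOn (fun x =>
      (⨆ t₁ ∈ Set.Icc (0:ℝ) ε₀, f (x + t₁)) *
      (⨆ t₂ ∈ Set.Icc (0:ℝ) ε₀,
        |(f (x + t₂))⁻¹ * deriv (deriv (deriv f)) (x + t₂)|))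
      (Set.Ioi c)) :
    TendstoUniformlyOn
      (fun ε s =>
        ((∫ x in Set.Ioi c, f x ^ (1 - s) * f (x + ε) ^ s)
          - (∫ x in Set.Ioi c, f x)
          + f c * s * ε + s / 2 * deriv f c * ε ^ 2) / ε ^ 2)
      (fun s => -(s * (1 - s) / 2) * ∫ x in Set.Ioi c, (f x)⁻¹ * (deriv f x) ^ 2)
      (nhdsWithin 0 (Set.Ioi 0)) (Set.Ioo 0 1) :=
  tail_estimate_halfline_general f c ε₀ hc hε₀ hf3 hpos hdens h1 h2 h3 h4
end

section
/- Let f be a C³ probability density on an interval (a,b) ⊂ ℝ, positive on (a,b), and let a < c < b. Suppose f extends continuously to [a,c] with f(a+0) and f'(a+0) existing (case κ₁ = 1, with f(a+0) = A₁ > 0). Define I⁻_s(c,f,ε) := ∫_a^c f(x)^{1-s} f(x+ε)^s dx − ∫_a^c f(x) dx − f(c)sε − (s/2)f'(c)ε². Then lim_{ε→+0} I⁻_s(c,f,ε)/ε = −A₁ s, uniformly for s ∈ (0,1). -/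
/-!
Put `Δ x = f (x + ε) - f x`. Near `a` the density is bounded below by some `m > 0` (it tends
to `A₁ > 0`) and Lipschitz (its derivative has a limit at `a`), so `Δ = O(ε)` and, by the
second-order bound `|u ^ (1 - s) * v ^ s - u - s (v - u)| ≤ (v - u)² / v`,
`f x ^ (1 - s) * f (x + ε) ^ s = f x + s Δ x + O(ε²)` uniformly in `s ∈ [0, 1]`.
Integrating over `(a, c)`, the shift telescopes:
`∫ Δ = ∫_c^{c+ε} f - ∫_a^{a+ε} f = (f c - A₁) ε + o(ε)`,
and the only term that survives division by `ε` is `-A₁ s`.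
-/

open MeasureTheory Real Filter
open Set Topology intervalIntegral
open scoped NNReal

theorem abs_rpow_mul_rpow_sub_le {u v s : ℝ} (hu : 0 < u) (hv : 0 < v) (hs₀ : 0 ≤ s)
    (hs₁ : s ≤ 1) : |u ^ (1 - s) * v ^ s - u - s * (v - u)| ≤ (v - u) ^ 2 / v := by
  have upper : u ^ (1 - s) * v ^ s ≤ (1 - s) * u + s * v :=
    geom_mean_le_arith_mean2_weighted (by linarith) hs₀ hu.le hv.le (by ring)
  have hexp : u ^ (1 - s) * v ^ s = u * exp (log (v / u) * s) := by
    rw [← rpow_def_of_pos (div_pos hv hu), div_rpow hv.le hu.le, rpow_sub hu, rpow_one]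
    field_simp
  have hlog : (v - u) / v ≤ log (v / u) := by
    have := one_sub_inv_le_log_of_pos (div_pos hv hu)
    rwa [inv_div, one_sub_div hv.ne'] at this
  have lower : u + s * (v - u) - s * ((v - u) ^ 2 / v) ≤ u ^ (1 - s) * v ^ s := by
    calc u + s * (v - u) - s * ((v - u) ^ 2 / v) = u * ((v - u) / v * s + 1) := by
          field_simp; ring
      _ ≤ u * (log (v / u) * s + 1) := by gcongr
      _ ≤ u * exp (log (v / u) * s) := by gcongr; exact add_one_le_exp _
      _ = _ := hexp.symm
  have hsq : 0 ≤ (v - u) ^ 2 / v := by positivity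
  rw [abs_le]
  constructor <;> nlinarith

theorem tendstoUniformlyOn_of_dist_le {ι α β : Type*} [PseudoMetricSpace β]
    {F : ι → α → β} {G : α → β} {l : Filter ι} {S : Set α} {h : ι → ℝ}
    (hh : Tendsto h l (𝓝 0))
    (hFG : ∀ᶠ i in l, ∀ x ∈ S, dist (F i x) (G x) ≤ h i) :
    TendstoUniformlyOn F G l S := by
  rw [Metric.tendstoUniformlyOn_iff]
  intro η hη
  filter_upwards [hFG, hh.eventually (gt_mem_nhds hη)] with i hi hlt x hx
  rw [dist_comm]
  exact (hi x hx).trans_lt hlt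

section RightLimit

variable {g : ℝ → ℝ} {a c A : ℝ}

theorem ContinuousOn.continuousOn_update_Icc (hg : ContinuousOn g (Ioc a c))
    (hlim : Tendsto g (𝓝[>] a) (𝓝 A)) : ContinuousOn (Function.update g a A) (Icc a c) := by
  rw [continuousOn_update_iff, Icc_sdiff_left]
  exact ⟨hg, fun _ => hlim.mono_left (nhdsWithin_mono _ Ioc_subset_Ioi_self)⟩

theorem ContinuousOn.exists_abs_le_of_tendsto_nhdsGT (hg : ContinuousOn g (Ioc a c))
    (hlim : Tendsto g (𝓝[>] a) (𝓝 A)) : ∃ K, ∀ x ∈ Ioc a c, |g x| ≤ K := by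
  obtain ⟨K, hK⟩ := isCompact_Icc.exists_bound_of_continuousOn (hg.continuousOn_update_Icc hlim)
  refine ⟨K, fun x hx => ?_⟩
  simpa [Function.update_of_ne hx.1.ne'] using hK x (Ioc_subset_Icc_self hx)

theorem ContinuousOn.exists_pos_le_of_tendsto_nhdsGT (hac : a ≤ c)
    (hg : ContinuousOn g (Ioc a c)) (hlim : Tendsto g (𝓝[>] a) (𝓝 A)) (hA : 0 < A)
    (hpos : ∀ x ∈ Ioc a c, 0 < g x) : ∃ m, 0 < m ∧ ∀ x ∈ Ioc a c, m ≤ g x := by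
  obtain ⟨x₀, hx₀, hmin⟩ :=
    isCompact_Icc.exists_isMinOn (nonempty_Icc.2 hac) (hg.continuousOn_update_Icc hlim)
  refine ⟨Function.update g a A x₀, ?_, fun x hx => ?_⟩
  · rcases eq_or_ne x₀ a with rfl | hne
    · simpa using hA
    · rw [Function.update_of_ne hne]
      exact hpos x₀ ⟨hx₀.1.lt_of_ne' hne, hx₀.2⟩
  · simpa [Function.update_of_ne hx.1.ne'] using hmin (Ioc_subset_Icc_self hx)

theorem ContinuousOn.intervalIntegrable_of_tendsto_nhdsGT (hac : a ≤ c)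
    (hg : ContinuousOn g (Ioc a c)) (hlim : Tendsto g (𝓝[>] a) (𝓝 A)) :
    IntervalIntegrable g volume a c :=
  ((hg.continuousOn_update_Icc hlim).intervalIntegrable_of_Icc hac).congr fun x hx => by
    rw [uIoc_of_le hac] at hx
    exact Function.update_of_ne hx.1.ne' _ _

end RightLimit

theorem tendsto_integral_div_nhdsGT {g : ℝ → ℝ} {p q A : ℝ} (hpq : p < q)
    (hg : IntervalIntegrable g volume p q) (hlim : Tendsto g (𝓝[>] p) (𝓝 A)) :
    Tendsto (fun ε => (∫ x in p..p + ε, g x) / ε) (𝓝[>] 0) (𝓝 A) := by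
  have hderiv : HasDerivWithinAt (fun u => ∫ x in p..u, g x) A (Ici p) p :=
    integral_hasDerivWithinAt_of_tendsto_ae_right IntervalIntegrable.refl
      ⟨Ioc p q, Ioc_mem_nhdsGT hpq, hg.1.aestronglyMeasurable⟩ (hlim.mono_left inf_le_left)
  have hslope := (hasDerivWithinAt_iff_tendsto_slope' self_notMem_Ioi).1 hderiv.Ioi_of_Ici
  have hshift : Tendsto (p + ·) (𝓝[>] 0) (𝓝[>] p) := by
    have := (map_add_left_nhdsGT (c := p) (a := 0)).le
    rwa [add_zero] at this
  refine (hslope.comp hshift).congr fun ε => ?_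
  simp [slope_def_field, div_eq_inv_mul]

theorem ContDiffOn.exists_lipschitzOnWith_Ioc {f : ℝ → ℝ} {a b c L : ℝ}
    (hf : ContDiffOn ℝ 1 f (Ioo a b)) (hcb : c < b)
    (hlim : Tendsto (deriv f) (𝓝[>] a) (𝓝 L)) :
    ∃ K, LipschitzOnWith K f (Ioc a c) := by
  have hsub : Ioc a c ⊆ Ioo a b := fun x hx => ⟨hx.1, hx.2.trans_lt hcb⟩
  obtain ⟨K, hK⟩ := ((hf.continuousOn_deriv_of_isOpen isOpen_Ioo le_rfl).mono hsub
    ).exists_abs_le_of_tendsto_nhdsGT hlim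
  refine ⟨K.toNNReal, (convex_Ioc a c).lipschitzOnWith_of_nnnorm_hasDerivWithin_le (f' := deriv f)
    (fun x hx => ?_) fun x hx => ?_⟩
  · exact ((hf.differentiableOn one_ne_zero x (hsub hx)).differentiableAt
      (isOpen_Ioo.mem_nhds (hsub hx))).hasDerivAt.hasDerivWithinAt
  · rw [← NNReal.coe_le_coe, coe_nnnorm, Real.norm_eq_abs]
    exact (hK x hx).trans (Real.le_coe_toNNReal K)

theorem IntervalIntegrable.of_mem_Icc {f : ℝ → ℝ} {a b x y : ℝ}
    (hf : IntervalIntegrable f volume a b) (hx : x ∈ Icc a b) (hy : y ∈ Icc a b) :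
    IntervalIntegrable f volume x y :=
  hf.mono_set (uIcc_subset_uIcc (Icc_subset_uIcc hx) (Icc_subset_uIcc hy))

theorem integral_comp_add_right_sub_integral {f : ℝ → ℝ} {a c ε : ℝ} (hac : a ≤ c)
    (hε : 0 ≤ ε) (hf : IntervalIntegrable f volume a (c + ε)) :
    (∫ x in a..c, f (x + ε)) - ∫ x in a..c, f x
      = (∫ x in c..c + ε, f x) - ∫ x in a..a + ε, f x := by
  rw [integral_comp_add_right, integral_interval_sub_interval_comm'
    (hf.of_mem_Icc ⟨by linarith, by linarith⟩ ⟨by linarith, le_rfl⟩)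
    (hf.of_mem_Icc ⟨le_rfl, by linarith⟩ ⟨hac, by linarith⟩)
    (hf.of_mem_Icc ⟨by linarith, by linarith⟩ ⟨le_rfl, by linarith⟩)]

section ShiftedGeometricMean

variable {f : ℝ → ℝ} {a c c' ε s : ℝ}

theorem IntervalIntegrable.comp_add_right_of_le (hac : a ≤ c) (hε : 0 ≤ ε)
    (hcc' : c + ε ≤ c') (hfi : IntervalIntegrable f volume a c') :
    IntervalIntegrable (fun x => f (x + ε)) volume a c := by
  simpa using (hfi.of_mem_Icc (x := a + ε) (y := c + ε) ⟨by linarith, by linarith⟩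
    ⟨by linarith, hcc'⟩).comp_add_right ε

theorem intervalIntegrable_rpow_mul_rpow_comp_add_right (hac : a ≤ c) (hε : 0 ≤ ε)
    (hcc' : c + ε ≤ c') (hfc : ContinuousOn f (Ioc a c'))
    (hfi : IntervalIntegrable f volume a c') (hf₀ : ∀ x ∈ Ioc a c', 0 ≤ f x) (hs₀ : 0 ≤ s)
    (hs₁ : s ≤ 1) :
    IntervalIntegrable (fun x => f x ^ (1 - s) * f (x + ε) ^ s) volume a c := by
  have hmem : ∀ x ∈ Ioc a c, x ∈ Ioc a c' ∧ x + ε ∈ Ioc a c' :=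
    fun x hx => ⟨⟨hx.1, by linarith [hx.2]⟩, ⟨by linarith [hx.1], by linarith [hx.2]⟩⟩
  have hI₀ : IntervalIntegrable f volume a c :=
    hfi.of_mem_Icc ⟨le_rfl, by linarith⟩ ⟨hac, by linarith⟩
  have hI₁ := hfi.comp_add_right_of_le hac hε hcc'
  have hcont : ContinuousOn (fun x => f x ^ (1 - s) * f (x + ε) ^ s) (Ioc a c) :=
    ((hfc.mono fun x hx => (hmem x hx).1).rpow_const fun _ _ => Or.inr (by linarith)).mul
      ((hfc.comp (continuous_add_const ε).continuousOn fun x hx => (hmem x hx).2).rpow_const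
        fun _ _ => Or.inr hs₀)
  refine ((hI₀.const_mul (1 - s)).add (hI₁.const_mul s)).mono_fun'
    (by rw [uIoc_of_le hac]; exact hcont.aestronglyMeasurable measurableSet_Ioc) ?_
  rw [uIoc_of_le hac]
  refine (ae_restrict_mem measurableSet_Ioc).mono fun x hx => ?_
  have hu := hf₀ x (hmem x hx).1
  have hv := hf₀ _ (hmem x hx).2
  dsimp only
  rw [Real.norm_of_nonneg (by positivity)]
  exact geom_mean_le_arith_mean2_weighted (by linarith) hs₀ hu hv (by ring)

theorem abs_integral_rpow_mul_rpow_comp_add_right_sub_le {m : ℝ} {K : ℝ≥0} (hac : a ≤ c)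
    (hε : 0 ≤ ε) (hcc' : c + ε ≤ c') (hfc : ContinuousOn f (Ioc a c'))
    (hfi : IntervalIntegrable f volume a c') (hm : 0 < m) (hmf : ∀ x ∈ Ioc a c', m ≤ f x)
    (hK : LipschitzOnWith K f (Ioc a c')) (hs₀ : 0 ≤ s) (hs₁ : s ≤ 1) :
    |(∫ x in a..c, f x ^ (1 - s) * f (x + ε) ^ s) - (∫ x in a..c, f x)
        - s * ((∫ x in a..c, f (x + ε)) - ∫ x in a..c, f x)|
      ≤ K ^ 2 * ε ^ 2 / m * (c - a) := by
  have hmem : ∀ x ∈ Ioc a c, x ∈ Ioc a c' ∧ x + ε ∈ Ioc a c' :=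
    fun x hx => ⟨⟨hx.1, by linarith [hx.2]⟩, ⟨by linarith [hx.1], by linarith [hx.2]⟩⟩
  have hI₀ : IntervalIntegrable f volume a c :=
    hfi.of_mem_Icc ⟨le_rfl, by linarith⟩ ⟨hac, by linarith⟩
  have hI₁ := hfi.comp_add_right_of_le hac hε hcc'
  have hI := intervalIntegrable_rpow_mul_rpow_comp_add_right hac hε hcc' hfc hfi
    (fun x hx => hm.le.trans (hmf x hx)) hs₀ hs₁
  rw [← integral_sub hI₁ hI₀, ← intervalIntegral.integral_const_mul,
    ← integral_sub hI hI₀,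
    ← integral_sub (hI.sub hI₀) ((hI₁.sub hI₀).const_mul s), ← Real.norm_eq_abs,
    ← abs_of_nonneg (sub_nonneg.2 hac)]
  refine norm_integral_le_of_norm_le_const fun x hx => ?_
  rw [uIoc_of_le hac] at hx
  obtain ⟨hx₀, hx₁⟩ := hmem x hx
  have hΔ : |f (x + ε) - f x| ≤ K * ε := by
    simpa [Real.dist_eq, abs_of_nonneg hε] using hK.dist_le_mul _ hx₁ _ hx₀
  calc ‖f x ^ (1 - s) * f (x + ε) ^ s - f x - s * (f (x + ε) - f x)‖
      ≤ (f (x + ε) - f x) ^ 2 / f (x + ε) :=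
        abs_rpow_mul_rpow_sub_le (hm.trans_le (hmf x hx₀)) (hm.trans_le (hmf _ hx₁)) hs₀ hs₁
    _ ≤ (K * ε) ^ 2 / m := by
        rw [← sq_abs]
        gcongr
        exact hmf _ hx₁
    _ = K ^ 2 * ε ^ 2 / m := by ring

end ShiftedGeometricMean

theorem dist_boundary_functional_div_le {f : ℝ → ℝ} {a c c' A D m ε s : ℝ} {K : ℝ≥0}
    (hac : a < c) (hε : 0 < ε) (hcc' : c + ε ≤ c') (hfc : ContinuousOn f (Ioc a c'))
    (hfi : IntervalIntegrable f volume a c') (hm : 0 < m) (hmf : ∀ x ∈ Ioc a c', m ≤ f x)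
    (hK : LipschitzOnWith K f (Ioc a c')) (hs₀ : 0 ≤ s) (hs₁ : s ≤ 1) :
    dist (((∫ x in Ioo a c, f x ^ (1 - s) * f (x + ε) ^ s) - (∫ x in Ioo a c, f x)
        - f c * s * ε - s / 2 * D * ε ^ 2) / ε) (-(A * s))
      ≤ ε * (K ^ 2 * (c - a) / m + |D|) + |(∫ x in c..c + ε, f x) / ε - f c|
        + |(∫ x in a..a + ε, f x) / ε - A| := by
  simp only [← integral_Ioc_eq_integral_Ioo, ← intervalIntegral.integral_of_le hac.le]
  have hmix := abs_integral_rpow_mul_rpow_comp_add_right_sub_le hac.le hε.le hcc' hfc hfi hm hmf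
    hK hs₀ hs₁
  rw [integral_comp_add_right_sub_integral hac.le hε.le
    (hfi.of_mem_Icc ⟨le_rfl, by linarith⟩ ⟨by linarith, hcc'⟩)] at hmix
  set G := ∫ x in a..c, f x ^ (1 - s) * f (x + ε) ^ s
  set I := ∫ x in a..c, f x
  set X := ∫ x in c..c + ε, f x
  set Y := ∫ x in a..a + ε, f x
  have hsplit : (G - I - f c * s * ε - s / 2 * D * ε ^ 2) / ε + A * s
      = (G - I - s * (X - Y)) / ε + s * (X / ε - f c) - s * (Y / ε - A) - s / 2 * D * ε := by
    field_simp
    ring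
  have hG : |(G - I - s * (X - Y)) / ε| ≤ ε * (K ^ 2 * (c - a) / m) := by
    rw [abs_div, abs_of_pos hε, div_le_iff₀ hε]
    exact hmix.trans_eq (by ring)
  have hX : |s * (X / ε - f c)| ≤ |X / ε - f c| := by
    rw [abs_mul, abs_of_nonneg hs₀]
    exact mul_le_of_le_one_left (abs_nonneg _) hs₁
  have hY : |s * (Y / ε - A)| ≤ |Y / ε - A| := by
    rw [abs_mul, abs_of_nonneg hs₀]
    exact mul_le_of_le_one_left (abs_nonneg _) hs₁
  have hD : |s / 2 * D * ε| ≤ ε * |D| := by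
    rw [abs_mul, abs_mul, abs_of_nonneg (by positivity : 0 ≤ s / 2), abs_of_pos hε]
    nlinarith [mul_nonneg (abs_nonneg D) hε.le]
  rw [Real.dist_eq, sub_neg_eq_add, hsplit]
  rw [abs_le] at hG hX hY hD ⊢
  constructor <;> linarith [hG.1, hG.2, hX.1, hX.2, hY.1, hY.2, hD.1, hD.2]

theorem left_boundary_estimate_kappa_one_general (f : ℝ → ℝ) (a b c A₁ : ℝ)
    (hac : a < c) (hcb : c < b)
    (hf3 : ContDiffOn ℝ 3 f (Set.Ioo a b))
    (hpos : ∀ x ∈ Set.Ioo a b, 0 < f x)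
    (hA₁ : 0 < A₁)
    (hf_lim : Tendsto f (nhdsWithin a (Set.Ioi a)) (nhds A₁))
    (hf'_lim : ∃ L : ℝ, Tendsto (deriv f) (nhdsWithin a (Set.Ioi a)) (nhds L)) :
    TendstoUniformlyOn
      (fun ε s =>
        ((∫ x in Set.Ioo a c, f x ^ (1 - s) * f (x + ε) ^ s)
          - (∫ x in Set.Ioo a c, f x)
          - f c * s * ε - s / 2 * deriv f c * ε ^ 2) / ε)
      (fun s => -(A₁ * s))
      (nhdsWithin 0 (Set.Ioi 0)) (Set.Ioo 0 1) := by
  obtain ⟨L, hL⟩ := hf'_lim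
  obtain ⟨c', hcc', hc'b⟩ := exists_between hcb
  have hsub : Ioc a c' ⊆ Ioo a b := fun x hx => ⟨hx.1, hx.2.trans_lt hc'b⟩
  have hfc : ContinuousOn f (Ioc a c') := hf3.continuousOn.mono hsub
  have hfi := hfc.intervalIntegrable_of_tendsto_nhdsGT (hac.trans hcc').le hf_lim
  obtain ⟨m, hm, hmf⟩ := hfc.exists_pos_le_of_tendsto_nhdsGT (hac.trans hcc').le hf_lim hA₁
    fun x hx => hpos x (hsub hx)
  obtain ⟨K, hK⟩ := (hf3.of_le (by norm_num)).exists_lipschitzOnWith_Ioc hc'b hL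
  have hfc_lim : Tendsto f (𝓝[>] c) (𝓝 (f c)) :=
    (hf3.continuousOn.continuousAt (Ioo_mem_nhds hac hcb)).tendsto.mono_left nhdsWithin_le_nhds
  refine tendstoUniformlyOn_of_dist_le (h := fun ε => ε * (K ^ 2 * (c - a) / m + |deriv f c|)
    + |(∫ x in c..c + ε, f x) / ε - f c| + |(∫ x in a..a + ε, f x) / ε - A₁|) ?_ ?_
  · have hε : Tendsto (fun ε : ℝ => ε) (𝓝[>] 0) (𝓝 0) := nhdsWithin_le_nhds
    have hX := ((tendsto_integral_div_nhdsGT hcc' (hfi.of_mem_Icc ⟨hac.le, hcc'.le⟩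
      ⟨(hac.trans hcc').le, le_rfl⟩) hfc_lim).sub_const (f c)).abs
    have hY := ((tendsto_integral_div_nhdsGT (hac.trans hcc') hfi hf_lim).sub_const A₁).abs
    simpa using ((hε.mul_const (K ^ 2 * (c - a) / m + |deriv f c|)).add hX).add hY
  · filter_upwards [Ioo_mem_nhdsGT (sub_pos.2 hcc')] with ε hε s hs
    exact dist_boundary_functional_div_le hac hε.1 (by linarith [hε.2]) hfc hfi hm hmf hK
      hs.1.le hs.2.le

theorem left_boundary_estimate_kappa_one (f : ℝ → ℝ) (a b c A₁ : ℝ)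
    (hac : a < c) (hcb : c < b)
    (hf3 : ContDiffOn ℝ 3 f (Set.Ioo a b))
    (hsupp : ∀ x ∉ Set.Ioo a b, f x = 0) (hpos : ∀ x ∈ Set.Ioo a b, 0 < f x)
    (hdens : ∫ x, f x = 1)
    (hA₁ : 0 < A₁)
    (hf_lim : Tendsto f (nhdsWithin a (Set.Ioi a)) (nhds A₁))
    (hf'_lim : ∃ L : ℝ, Tendsto (deriv f) (nhdsWithin a (Set.Ioi a)) (nhds L))
    (hf''_lim : ∃ M : ℝ, Tendsto (deriv (deriv f)) (nhdsWithin a (Set.Ioi a)) (nhds M)) :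
    TendstoUniformlyOn
      (fun ε s =>
        ((∫ x in Set.Ioo a c, f x ^ (1 - s) * f (x + ε) ^ s)
          - (∫ x in Set.Ioo a c, f x)
          - f c * s * ε - s / 2 * deriv f c * ε ^ 2) / ε)
      (fun s => -(A₁ * s))
      (nhdsWithin 0 (Set.Ioi 0)) (Set.Ioo 0 1) :=
  left_boundary_estimate_kappa_one_general f a b c A₁ hac hcb hf3 hpos hA₁ hf_lim hf'_lim
end

section
/- Let f be the density f(x) = κ x^{κ-1} on (0,1) (and 0 elsewhere) with 0 < κ < 1. Then for 0 < s < 1, lim_{ε→+0} ε^{-κ} ∫_0^ε f(x)^{1-s} f(x+ε)^s dx evaluated via the substitution x = εu equals κ ∫_0^1 u^{(κ-1)(1-s)}(1+u)^{(κ-1)s} du, a finite positive quantity; in particular ∫_0^ε f^{1-s}(x) f^s(x+ε) dx = O(ε^κ) as ε → +0. -/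
open MeasureTheory Real Filter

theorem boundary_layer_contribution (f : ℝ → ℝ) (κ : ℝ)
    (hκ : κ ∈ Set.Ioo (0:ℝ) 1)
    (hf : ∀ x, f x = if x ∈ Set.Ioo (0:ℝ) 1 then κ * x ^ (κ - 1) else 0) :
    ∀ s ∈ Set.Ioo (0:ℝ) 1,
      IntegrableOn
        (fun u : ℝ => u ^ ((κ - 1) * (1 - s)) * (1 + u) ^ ((κ - 1) * s))
        (Set.Ioo 0 1) ∧
      0 < (∫ u in Set.Ioo (0:ℝ) 1,
        u ^ ((κ - 1) * (1 - s)) * (1 + u) ^ ((κ - 1) * s)) ∧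
      (∀ ε ∈ Set.Ioo (0:ℝ) (1/2),
        (∫ x in Set.Ioo (0:ℝ) ε, f x ^ (1 - s) * f (x + ε) ^ s)
          = κ * ε ^ κ *
            ∫ u in Set.Ioo (0:ℝ) 1,
              u ^ ((κ - 1) * (1 - s)) * (1 + u) ^ ((κ - 1) * s)) ∧
      (fun ε : ℝ => ∫ x in Set.Ioo (0:ℝ) ε, f x ^ (1 - s) * f (x + ε) ^ s)
        =O[nhdsWithin 0 (Set.Ioi 0)] (fun ε : ℝ => ε ^ κ) := by
  obtain ⟨hκ0, hκ1⟩ := hκ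
  rintro s ⟨hs0, hs1⟩
  set a : ℝ := (κ - 1) * (1 - s) with ha
  set b : ℝ := (κ - 1) * s with hb
  have ha0 : -1 < a := by nlinarith
  have hb1 : b ≤ 0 := by nlinarith
  have hab : a + b = κ - 1 := by ring
  have hmeas : Measurable (fun u : ℝ => u ^ a * (1 + u) ^ b) := by fun_prop
  -- integrability
  have hint : IntegrableOn (fun u : ℝ => u ^ a * (1 + u) ^ b) (Set.Ioo 0 1) := by
    have h1 : IntegrableOn (fun u : ℝ => u ^ a) (Set.Ioo 0 1) := by
      have h : IntervalIntegrable (fun x : ℝ => x ^ a) volume 0 1 := by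
        open intervalIntegral in exact intervalIntegrable_rpow' ha0
      rw [intervalIntegrable_iff_integrableOn_Ioo_of_le (by norm_num)] at h
      exact h
    refine Integrable.mono' h1 hmeas.aestronglyMeasurable ?_
    rw [ae_restrict_iff' measurableSet_Ioo]
    filter_upwards with u hu
    have hu0 : (0:ℝ) < u := hu.1
    have hle : (1 + u) ^ b ≤ 1 :=
      Real.rpow_le_one_of_one_le_of_nonpos (by linarith) hb1
    have hnn : 0 ≤ u ^ a * (1 + u) ^ b :=
      mul_nonneg (Real.rpow_nonneg hu0.le _) (Real.rpow_nonneg (by linarith) _)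
    rw [Real.norm_of_nonneg hnn]
    calc u ^ a * (1 + u) ^ b ≤ u ^ a * 1 :=
          mul_le_mul_of_nonneg_left hle (Real.rpow_nonneg hu0.le _)
      _ = u ^ a := mul_one _
  -- positivity
  have hpos : 0 < ∫ u in Set.Ioo (0:ℝ) 1, u ^ a * (1 + u) ^ b := by
    have hnn : 0 ≤ᵐ[volume.restrict (Set.Ioo (0:ℝ) 1)]
        fun u : ℝ => u ^ a * (1 + u) ^ b := by
      rw [EventuallyLE, ae_restrict_iff' measurableSet_Ioo]
      filter_upwards with u hu
      exact mul_nonneg (Real.rpow_nonneg hu.1.le _)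
        (Real.rpow_nonneg (by linarith [hu.1]) _)
    rw [setIntegral_pos_iff_support_of_nonneg_ae hnn hint]
    have hsupp : Set.Ioo (0:ℝ) 1 ⊆
        (Function.support fun u : ℝ => u ^ a * (1 + u) ^ b) ∩ Set.Ioo 0 1 := by
      intro u hu
      refine ⟨?_, hu⟩
      simp only [Function.mem_support]
      exact ne_of_gt (mul_pos (Real.rpow_pos_of_pos hu.1 _)
        (Real.rpow_pos_of_pos (by linarith [hu.1]) _))
    refine lt_of_lt_of_le ?_ (measure_mono hsupp)
    simp [Real.volume_Ioo]
  -- key formula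
  have key : ∀ ε ∈ Set.Ioo (0:ℝ) (1/2),
      (∫ x in Set.Ioo (0:ℝ) ε, f x ^ (1 - s) * f (x + ε) ^ s)
        = κ * ε ^ κ * ∫ u in Set.Ioo (0:ℝ) 1, u ^ a * (1 + u) ^ b := by
    rintro ε ⟨hε0, hε2⟩
    have hκs : κ ^ (1 - s) * κ ^ s = κ := by
      rw [← Real.rpow_add hκ0]; norm_num
    have step1 : ∫ x in Set.Ioo (0:ℝ) ε, f x ^ (1 - s) * f (x + ε) ^ s
        = ∫ x in Set.Ioo (0:ℝ) ε, κ * (x ^ a * (x + ε) ^ b) := by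
      refine setIntegral_congr_fun measurableSet_Ioo (fun x hx => ?_)
      obtain ⟨hx0, hxε⟩ := hx
      have hx1 : x ∈ Set.Ioo (0:ℝ) 1 := ⟨hx0, by linarith⟩
      have hxε1 : x + ε ∈ Set.Ioo (0:ℝ) 1 := ⟨by linarith, by linarith⟩
      rw [hf x, hf (x + ε), if_pos hx1, if_pos hxε1,
        Real.mul_rpow hκ0.le (Real.rpow_nonneg hx0.le _),
        Real.mul_rpow hκ0.le (Real.rpow_nonneg (by linarith : (0:ℝ) ≤ x + ε) _),
        ← Real.rpow_mul hx0.le, ← Real.rpow_mul (by linarith : (0:ℝ) ≤ x + ε)]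
      linear_combination (x ^ a * (x + ε) ^ b) * hκs
    have hI : ∫ u in (0:ℝ)..1, u ^ a * (1 + u) ^ b
        = ∫ u in Set.Ioo (0:ℝ) 1, u ^ a * (1 + u) ^ b := by
      rw [intervalIntegral.integral_of_le (by norm_num : (0:ℝ) ≤ 1),
        integral_Ioc_eq_integral_Ioo]
    have hεκ : ε ^ κ = ε * ε ^ (κ - 1) := by
      rw [show κ = 1 + (κ - 1) by ring, Real.rpow_add hε0, Real.rpow_one]
      ring_nf
    have hsub : ∫ x in (0:ℝ)..ε, x ^ a * (x + ε) ^ b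
        = ε ^ κ * ∫ u in Set.Ioo (0:ℝ) 1, u ^ a * (1 + u) ^ b := by
      have h0 : (ε:ℝ) • ∫ u in (0:ℝ)..1, (ε * u) ^ a * ((ε * u) + ε) ^ b
          = ∫ x in (ε * 0)..(ε * 1), x ^ a * (x + ε) ^ b :=
        intervalIntegral.smul_integral_comp_mul_left (fun x => x ^ a * (x + ε) ^ b) ε
      rw [mul_zero, mul_one] at h0
      rw [← h0]
      have h1 : Set.EqOn (fun u : ℝ => (ε * u) ^ a * ((ε * u) + ε) ^ b)
          (fun u : ℝ => ε ^ (κ - 1) * (u ^ a * (1 + u) ^ b)) (Set.uIcc 0 1) := by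
        intro u hu
        rw [Set.uIcc_of_le (by norm_num : (0:ℝ) ≤ 1)] at hu
        have hu0 : (0:ℝ) ≤ u := hu.1
        show (ε * u) ^ a * ((ε * u) + ε) ^ b = ε ^ (κ - 1) * (u ^ a * (1 + u) ^ b)
        rw [show (ε * u) + ε = ε * (1 + u) by ring,
          Real.mul_rpow hε0.le hu0,
          Real.mul_rpow hε0.le (by linarith : (0:ℝ) ≤ 1 + u),
          ← hab, Real.rpow_add hε0]
        ring
      rw [intervalIntegral.integral_congr h1, intervalIntegral.integral_const_mul,
        hI, smul_eq_mul, hεκ]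
      ring
    have step2 : ∫ x in Set.Ioo (0:ℝ) ε, κ * (x ^ a * (x + ε) ^ b)
        = κ * ∫ x in (0:ℝ)..ε, x ^ a * (x + ε) ^ b := by
      rw [← integral_Ioc_eq_integral_Ioo, ← intervalIntegral.integral_of_le hε0.le,
        intervalIntegral.integral_const_mul]
    rw [step1, step2, hsub]
    ring
  refine ⟨hint, hpos, key, ?_⟩
  rw [Asymptotics.isBigO_iff]
  refine ⟨κ * ∫ u in Set.Ioo (0:ℝ) 1, u ^ a * (1 + u) ^ b, ?_⟩
  filter_upwards [Ioo_mem_nhdsGT_of_mem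
    (by norm_num : (0:ℝ) ∈ Set.Ico (0:ℝ) (1/2))] with ε hε
  rw [key ε hε]
  have hεκ : 0 < ε ^ κ := Real.rpow_pos_of_pos hε.1 κ
  rw [Real.norm_of_nonneg (by positivity), Real.norm_of_nonneg hεκ.le]
  nlinarith [hpos, hεκ, hκ0]
end

section
/- Let f(x) = κ x^{κ-1} on (0,1) with 0 < κ < 1, and f_ε(x) := f(x−ε). Then for each 0 < s < 1, with A₁ = A₂ = κ (since f(x) ~ κx^{κ-1} near 0, and f(1−x) → κ as x → +0, giving κ₂ = 1), lim_{ε→+0} I^s(f_0‖f_ε)/ε^κ = ((1−κ)/κ)·κ·s·B(s+κ(1−s), 1−κ). -/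
open MeasureTheory Real Filter Set intervalIntegral

/-- Relative Rényi entropy `I^s(p‖q) = -log ∫ p^s q^{1-s}` for densities on ℝ. -/
noncomputable def renyi (s : ℝ) (p q : ℝ → ℝ) : ℝ :=
  - Real.log (∫ x, p x ^ s * q x ^ (1 - s))

/-- The Euler beta function `B(x,y) = ∫_0^1 t^{x-1} (1-t)^{y-1} dt`. -/
noncomputable def betaFn (x y : ℝ) : ℝ :=
  ∫ t in (0:ℝ)..1, t ^ (x - 1) * (1 - t) ^ (y - 1)

lemma II_one_sub_rpow {r : ℝ} (hr : -1 < r) (a c : ℝ) :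
    IntervalIntegrable (fun t => (1 - t) ^ r) volume a c := by
  have h := (intervalIntegrable_rpow' hr (a := 1 - c) (b := 1 - a)).comp_sub_left 1
  simpa using h.symm

lemma bound_one_sub_rpow {b : ℝ} (hb0 : b < 0) (hb1 : -1 < b) {t : ℝ}
    (ht : 1/2 ≤ t) (ht1 : t ≤ 1) : |1 - t ^ b| ≤ 2 * (1 - t) := by
  have ht0 : (0:ℝ) < t := by linarith
  have h1 : (1:ℝ) ≤ t ^ b := Real.one_le_rpow_of_pos_of_le_one_of_nonpos ht0 ht1 hb0.le
  rw [abs_sub_comm, abs_of_nonneg (by linarith)]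
  have htc : t ≤ t ^ (-b) := by
    simpa using Real.rpow_le_rpow_of_exponent_ge ht0 ht1 (by linarith : -b ≤ 1)
  have htcpos : 0 < t ^ (-b) := Real.rpow_pos_of_pos ht0 _
  have hbt : t ^ b = (t ^ (-b))⁻¹ := by
    rw [← Real.rpow_neg ht0.le, neg_neg]
  have hinv : t ^ (-b) * (t ^ (-b))⁻¹ = 1 := mul_inv_cancel₀ htcpos.ne'
  rw [hbt]
  nlinarith [htc, htcpos, hinv, inv_pos.2 htcpos]

lemma contOn_one_sub_rpow {r : ℝ} {c : ℝ} (hc : c < 1) :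
    ContinuousOn (fun t : ℝ => (1 - t) ^ r) (Icc 0 c) := by
  apply ContinuousOn.rpow_const (by fun_prop)
  intro t ht
  refine Or.inl fun h => ?_
  rw [sub_eq_zero] at h
  linarith [ht.2, h.symm.le]

lemma measurable_w2 {b κ : ℝ} : Measurable (fun t : ℝ => (1 - t ^ b) * (1 - t) ^ (-1 - κ)) := by
  fun_prop

lemma hW2 {b κ : ℝ} (hb1 : -1 < b) (hb0 : b < 0) (hκ0 : 0 < κ) (hκ1 : κ < 1) :
    IntervalIntegrable (fun t : ℝ => (1 - t ^ b) * (1 - t) ^ (-1 - κ)) volume 0 1 := by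
  have h12 : IntervalIntegrable (fun t : ℝ => (1 - t ^ b) * (1 - t) ^ (-1 - κ)) volume 0 (1/2) := by
    apply IntervalIntegrable.mul_continuousOn
    · exact intervalIntegrable_const.sub (intervalIntegrable_rpow' hb1)
    · rw [uIcc_of_le (by norm_num)]
      exact contOn_one_sub_rpow (by norm_num)
  refine h12.trans ?_
  apply IntervalIntegrable.mono_fun' ((II_one_sub_rpow (r := -κ) (by linarith) (1/2) 1).const_mul 2)
  · exact measurable_w2.aestronglyMeasurable
  · rw [uIoc_of_le (by norm_num)]
    refine ae_restrict_of_forall_mem measurableSet_Ioc ?_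
    intro t ht
    rcases eq_or_lt_of_le ht.2 with h1 | h1
    · subst h1
      simp [Real.zero_rpow (by linarith : -κ ≠ 0), Real.zero_rpow (by linarith : -1-κ ≠ 0)]
    · have ht0 : (0:ℝ) < t := by linarith [ht.1]
      have h1t : (0:ℝ) < 1 - t := by linarith
      have hbnd := bound_one_sub_rpow hb0 hb1 (le_of_lt ht.1) ht.2
      have hsplit : (1 - t) ^ (-κ) = (1 - t) * (1 - t) ^ (-1 - κ) := by
        have h' : (1 - t) ^ (-κ) = (1-t) ^ ((1:ℝ) + (-1-κ)) := by ring_nf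
        rw [h', Real.rpow_add h1t, Real.rpow_one]
      simp only [norm_mul, Real.norm_eq_abs]
      rw [abs_of_nonneg (Real.rpow_nonneg h1t.le _)]
      calc |1 - t ^ b| * (1 - t) ^ (-1 - κ) ≤ 2 * (1 - t) * (1 - t) ^ (-1-κ) :=
            mul_le_mul_of_nonneg_right hbnd (Real.rpow_nonneg h1t.le _)
        _ = 2 * (1 - t) ^ (-κ) := by rw [hsplit]; ring

lemma hW3 {b κ : ℝ} (hb1 : -1 < b) (hb0 : b < 0) (hκ0 : 0 < κ) (hκ1 : κ < 1) :
    IntervalIntegrable (fun t : ℝ => t ^ b * (1 - t) ^ (-κ)) volume 0 1 := by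
  have h12 : IntervalIntegrable (fun t : ℝ => t ^ b * (1 - t) ^ (-κ)) volume 0 (1/2) := by
    apply IntervalIntegrable.mul_continuousOn (intervalIntegrable_rpow' hb1)
    rw [uIcc_of_le (by norm_num)]
    exact contOn_one_sub_rpow (by norm_num)
  refine h12.trans ?_
  apply IntervalIntegrable.continuousOn_mul (II_one_sub_rpow (by linarith : (-1:ℝ) < -κ) (1/2) 1)
  rw [uIcc_of_le (by norm_num)]
  apply ContinuousOn.rpow_const (by fun_prop)
  intro t ht
  exact Or.inl (by intro h; rw [h] at ht; norm_num at ht)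

lemma FTC1 {κ : ℝ} (hκ0 : 0 < κ) {c : ℝ} (hc0 : 0 ≤ c) (hc1 : c < 1) :
    ∫ t in (0:ℝ)..c, (1 - t) ^ (-1 - κ) = ((1 - c) ^ (-κ) - 1) / κ := by
  have key : ∫ t in (0:ℝ)..c, (1 - t) ^ (-1 - κ)
      = (fun t : ℝ => (1 - t) ^ (-κ) / κ) c - (fun t : ℝ => (1 - t) ^ (-κ) / κ) 0 := by
    apply integral_eq_sub_of_hasDerivAt
    · intro x hx
      rw [uIcc_of_le hc0] at hx
      have hx1 : 0 < 1 - x := by linarith [hx.2]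
      have h1 : HasDerivAt (fun t : ℝ => 1 - t) (-1) x := by
        simpa using (hasDerivAt_id x).const_sub 1
      have h2 : HasDerivAt (fun t : ℝ => (1 - t) ^ (-κ))
          (-κ * (1 - x) ^ (-κ - 1) * (-1)) x :=
        (Real.hasDerivAt_rpow_const (Or.inl hx1.ne')).comp x h1
      have h3 := h2.div_const κ
      refine h3.congr_deriv ?_
      rw [show (-κ - 1 : ℝ) = -1 - κ by ring]
      field_simp
    · apply ContinuousOn.intervalIntegrable
      rw [uIcc_of_le hc0]
      exact contOn_one_sub_rpow hc1
  rw [key]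
  simp [Real.one_rpow]
  ring

lemma IBP {b κ : ℝ} (hb1 : -1 < b) (hb0 : b < 0) (hκ0 : 0 < κ) (hκ1 : κ < 1) :
    1 + κ * ∫ t in (0:ℝ)..1, (1 - t ^ b) * (1 - t) ^ (-1 - κ)
      = (1 + b - κ) * ∫ t in (0:ℝ)..1, t ^ b * (1 - t) ^ (-κ) := by
  set w2 : ℝ → ℝ := fun t => (1 - t ^ b) * (1 - t) ^ (-1 - κ) with hw2
  set w3 : ℝ → ℝ := fun t => t ^ b * (1 - t) ^ (-κ) with hw3
  set Φ : ℝ → ℝ := fun t => (1 - t) ^ (-κ) * (1 - t ^ (1 + b)) with hΦ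
  have hderiv : ∀ x ∈ Ioo (0:ℝ) 1,
      HasDerivAt Φ (κ * w2 x - (1 + b - κ) * w3 x) x := by
    intro x hx
    have hx0 : (0:ℝ) < x := hx.1
    have hx1 : (0:ℝ) < 1 - x := by linarith [hx.2]
    have h1 : HasDerivAt (fun t : ℝ => 1 - t) (-1) x := by
      simpa using (hasDerivAt_id x).const_sub 1
    have hu : HasDerivAt (fun t : ℝ => (1 - t) ^ (-κ))
        (-κ * (1 - x) ^ (-κ - 1) * (-1)) x :=
      (Real.hasDerivAt_rpow_const (Or.inl hx1.ne')).comp x h1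
    have hv : HasDerivAt (fun t : ℝ => 1 - t ^ (1 + b)) (-((1 + b) * x ^ (1 + b - 1))) x := by
      exact ((Real.hasDerivAt_rpow_const (p := 1 + b) (Or.inl hx0.ne')).const_sub 1)
    have hprod := hu.mul hv
    refine hprod.congr_deriv ?_
    rw [show (1 + b - 1 : ℝ) = b by ring]
    have e1 : x ^ (1 + b) = x * x ^ b := by
      rw [Real.rpow_add hx0, Real.rpow_one]
    have e2 : (1 - x) ^ (-κ - 1) = (1 - x) ^ (-1 - κ) := by ring_nf
    have e3 : (1 - x) ^ (-κ) = (1 - x) * (1 - x) ^ (-1 - κ) := by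
      have h' : (1 - x) ^ (-κ) = (1 - x) ^ ((1:ℝ) + (-1 - κ)) := by ring_nf
      rw [h', Real.rpow_add hx1, Real.rpow_one]
    simp only [hw2, hw3]
    rw [e1, e2, e3]
    ring
  have hint : IntervalIntegrable (fun x => κ * w2 x - (1 + b - κ) * w3 x) volume 0 1 :=
    ((hW2 hb1 hb0 hκ0 hκ1).const_mul κ).sub ((hW3 hb1 hb0 hκ0 hκ1).const_mul (1 + b - κ))
  have ha : Tendsto Φ (nhdsWithin 0 (Ioi 0)) (nhds 1) := by
    have h1 : Tendsto (fun t : ℝ => (1 - t) ^ (-κ)) (nhds 0) (nhds 1) := by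
      have hc : ContinuousAt (fun t : ℝ => (1 - t) ^ (-κ)) 0 := by
        apply ContinuousAt.rpow_const (by fun_prop)
        norm_num
      simpa using hc.tendsto
    have h2 : Tendsto (fun t : ℝ => 1 - t ^ (1 + b)) (nhds 0) (nhds 1) := by
      have hc : ContinuousAt (fun t : ℝ => t ^ (1 + b)) 0 :=
        Real.continuousAt_rpow_const 0 (1 + b) (Or.inr (by linarith))
      have hc2 : ContinuousAt (fun t : ℝ => 1 - t ^ (1 + b)) 0 := continuousAt_const.sub hc
      have := hc2.tendsto
      simpa [Real.zero_rpow (by linarith : (1:ℝ) + b ≠ 0)] using this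
    have := (h1.mul h2)
    simp only [mul_one] at this
    exact this.mono_left nhdsWithin_le_nhds
  have hb' : Tendsto Φ (nhdsWithin 1 (Iio 1)) (nhds 0) := by
    apply squeeze_zero_norm' (a := fun t : ℝ => (1 - t) ^ (1 - κ))
    · filter_upwards [Ioo_mem_nhdsLT_of_mem
        (show (1:ℝ) ∈ Ioc (1/2) 1 by constructor <;> norm_num)] with t ht
      have ht0 : (0:ℝ) < t := by linarith [ht.1]
      have ht1 : (0:ℝ) < 1 - t := by linarith [ht.2]
      have hA : 0 ≤ 1 - t ^ (1 + b) := by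
        have := Real.rpow_le_one ht0.le ht.2.le (by linarith : (0:ℝ) ≤ 1 + b)
        linarith
      have hB : 1 - t ^ (1 + b) ≤ 1 - t := by
        have := Real.rpow_le_rpow_of_exponent_ge ht0 ht.2.le (by linarith : 1 + b ≤ 1)
        rw [Real.rpow_one] at this
        linarith
      have hpos : 0 ≤ (1 - t) ^ (-κ) := Real.rpow_nonneg ht1.le _
      simp only [hΦ, Real.norm_eq_abs, abs_mul]
      rw [abs_of_nonneg hpos, abs_of_nonneg hA]
      calc (1 - t) ^ (-κ) * (1 - t ^ (1 + b)) ≤ (1 - t) ^ (-κ) * (1 - t) :=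
            mul_le_mul_of_nonneg_left hB hpos
        _ = (1 - t) ^ (1 - κ) := by
            rw [show (1 - κ : ℝ) = -κ + 1 by ring, Real.rpow_add ht1, Real.rpow_one]
    · have hc : ContinuousAt (fun t : ℝ => (1 - t) ^ (1 - κ)) 1 := by
        have hone : ContinuousAt (fun t : ℝ => 1 - t) 1 := by fun_prop
        have h2 : ContinuousAt (fun x : ℝ => x ^ (1 - κ)) ((fun t : ℝ => 1 - t) 1) := by
          simpa using Real.continuousAt_rpow_const 0 (1 - κ) (Or.inr (by linarith))
        exact h2.comp hone
      have := hc.tendsto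
      simp only [sub_self, Real.zero_rpow (by linarith : (1:ℝ) - κ ≠ 0)] at this
      exact this.mono_left nhdsWithin_le_nhds
  have key := integral_eq_sub_of_hasDerivAt_of_tendsto zero_lt_one hderiv hint ha hb'
  rw [integral_sub ((hW2 hb1 hb0 hκ0 hκ1).const_mul κ) ((hW3 hb1 hb0 hκ0 hκ1).const_mul (1 + b - κ)),
    intervalIntegral.integral_const_mul, intervalIntegral.integral_const_mul] at key
  linarith [key]

lemma COV {κ a b ε : ℝ} (hκ0 : 0 < κ) (hab : a + b = κ - 1) (hε0 : 0 < ε) (hε1 : ε < 1) :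
    ∫ x in Ioo ε 1, κ * x ^ a * (x - ε) ^ b
      = κ * ε ^ κ * ∫ t in Ioo (0:ℝ) (1 - ε), t ^ b * (1 - t) ^ (-1 - κ) := by
  set φ : ℝ → ℝ := fun t => ε * (1 - t)⁻¹ with hφ
  set φ' : ℝ → ℝ := fun t => ε * ((1 - t) ^ 2)⁻¹ with hφ'
  have hmem : ∀ t ∈ Ioo (0:ℝ) (1 - ε), 0 < 1 - t ∧ ε < 1 - t := by
    intro t ht
    exact ⟨by linarith [ht.2], by linarith [ht.2]⟩
  have hderiv : ∀ t ∈ Ioo (0:ℝ) (1 - ε), HasDerivWithinAt φ (φ' t) (Ioo (0:ℝ) (1 - ε)) t := by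
    intro t ht
    obtain ⟨h1, h2⟩ := hmem t ht
    have hinv : HasDerivAt (fun t : ℝ => (1 - t)⁻¹) (-(-1) / (1 - t) ^ 2) t := by
      exact ((hasDerivAt_id t).const_sub 1).inv h1.ne'
    have := (hinv.const_mul ε).hasDerivWithinAt (s := Ioo (0:ℝ) (1 - ε))
    refine this.congr_deriv ?_
    simp [hφ']
  have hinj : InjOn φ (Ioo (0:ℝ) (1 - ε)) := by
    intro t ht t' ht' h
    obtain ⟨h1, _⟩ := hmem t ht
    obtain ⟨h1', _⟩ := hmem t' ht'
    simp only [hφ] at h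
    have := mul_left_cancel₀ hε0.ne' h
    have := inv_injective this
    linarith
  have himg : φ '' Ioo (0:ℝ) (1 - ε) = Ioo ε 1 := by
    ext y
    constructor
    · rintro ⟨t, ht, rfl⟩
      obtain ⟨h1, h2⟩ := hmem t ht
      have hinv1 : (1 - t) * (1 - t)⁻¹ = 1 := mul_inv_cancel₀ h1.ne'
      have hinvpos : 0 < (1 - t)⁻¹ := inv_pos.2 h1
      constructor
      · simp only [hφ]
        nlinarith [ht.1]
      · simp only [hφ]
        nlinarith
    · rintro ⟨hy1, hy2⟩
      have hy0 : 0 < y := lt_trans hε0 hy1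
      refine ⟨1 - ε / y, ⟨?_, ?_⟩, ?_⟩
      · have : ε / y < 1 := (div_lt_one hy0).2 hy1
        linarith
      · have : ε < ε / y := by
          rw [lt_div_iff₀ hy0]
          nlinarith
        linarith
      · simp only [hφ]
        field_simp
        rw [sub_sub_cancel, div_self hε0.ne']
  rw [← himg, integral_image_eq_integral_abs_deriv_smul measurableSet_Ioo hderiv hinj]
  rw [show (κ * ε ^ κ) * ∫ t in Ioo (0:ℝ) (1 - ε), t ^ b * (1 - t) ^ (-1 - κ)
      = ∫ t in Ioo (0:ℝ) (1 - ε), (κ * ε ^ κ) * (t ^ b * (1 - t) ^ (-1 - κ)) from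
    (MeasureTheory.integral_const_mul _ _).symm]
  apply setIntegral_congr_fun measurableSet_Ioo
  intro t ht
  show |φ' t| • (κ * φ t ^ a * (φ t - ε) ^ b) = κ * ε ^ κ * (t ^ b * (1 - t) ^ (-1 - κ))
  obtain ⟨h1, h2⟩ := hmem t ht
  have ht0 : 0 < t := ht.1
  have hφpos : 0 < φ' t := by
    simp only [hφ']
    positivity
  have hφt : φ t - ε = ε * t * (1 - t)⁻¹ := by
    simp only [hφ]
    field_simp
    ring
  have e1 : (φ t) ^ a = ε ^ a * ((1 - t) ^ a)⁻¹ := by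
    simp only [hφ]
    rw [Real.mul_rpow hε0.le (inv_nonneg.2 h1.le), Real.inv_rpow h1.le]
  have e2 : (φ t - ε) ^ b = ε ^ b * t ^ b * ((1 - t) ^ b)⁻¹ := by
    rw [hφt, Real.mul_rpow (by positivity) (inv_nonneg.2 h1.le),
      Real.mul_rpow hε0.le ht0.le, Real.inv_rpow h1.le]
  have e3 : ε ^ κ = ε * ε ^ a * ε ^ b := by
    rw [show κ = 1 + a + b by linarith, Real.rpow_add hε0, Real.rpow_add hε0, Real.rpow_one]
  have e4 : (1 - t) ^ (-1 - κ) = (((1 - t) ^ 2) * (1 - t) ^ a * (1 - t) ^ b)⁻¹ := by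
    rw [show (-1 - κ : ℝ) = -(2 + a + b) by linarith, Real.rpow_neg h1.le]
    congr 1
    rw [Real.rpow_add h1, Real.rpow_add h1,
      show ((2:ℝ)) = ((2:ℕ):ℝ) by norm_num, Real.rpow_natCast]
  rw [smul_eq_mul, abs_of_pos hφpos, e1, e2]
  rw [e3, e4]
  simp only [hφ']
  field_simp

theorem power_density_renyi_limit (f : ℝ → ℝ) (κ : ℝ)
    (hκ : κ ∈ Set.Ioo (0:ℝ) 1)
    (hf : ∀ x, f x = if x ∈ Set.Ioo (0:ℝ) 1 then κ * x ^ (κ - 1) else 0) :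
    ∀ s ∈ Set.Ioo (0:ℝ) 1,
      Tendsto
        (fun ε : ℝ => renyi s (fun x => f x) (fun x => f (x - ε)) / ε ^ κ)
        (nhdsWithin 0 (Set.Ioi 0))
        (nhds ((1 - κ) / κ * κ * s * betaFn (s + κ * (1 - s)) (1 - κ))) := by
  obtain ⟨hκ0, hκ1⟩ := hκ
  intro s hs
  obtain ⟨hs0, hs1⟩ := hs
  set a : ℝ := (κ - 1) * s with ha
  set b : ℝ := (κ - 1) * (1 - s) with hb
  have hb1 : -1 < b := by rw [hb]; nlinarith
  have hb0 : b < 0 := by rw [hb]; nlinarith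
  have hab : a + b = κ - 1 := by rw [ha, hb]; ring
  set F : ℝ → ℝ := fun u => ∫ t in (0:ℝ)..u, (1 - t ^ b) * (1 - t) ^ (-1 - κ) with hF
  set C : ℝ := (1 - κ) / κ * κ * s * betaFn (s + κ * (1 - s)) (1 - κ) with hC
  -- the IBP identity
  have hCval : 1 + κ * F 1 = C := by
    have hibp := IBP hb1 hb0 hκ0 hκ1
    have hbeta : betaFn (s + κ * (1 - s)) (1 - κ)
        = ∫ t in (0:ℝ)..1, t ^ b * (1 - t) ^ (-κ) := by
      unfold betaFn
      simp only [show s + κ * (1 - s) - 1 = b from by rw [hb]; ring,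
        show (1 - κ) - 1 = -κ from by ring]
    rw [hC, hbeta, hF]
    rw [hibp, show (1 - κ) / κ * κ * s = 1 + b - κ from by field_simp; rw [hb]; ring]
  -- the key integral identity
  have key : ∀ ε ∈ Ioo (0:ℝ) 1,
      (∫ x, f x ^ s * f (x - ε) ^ (1 - s)) = 1 - ε ^ κ * (1 + κ * F (1 - ε)) := by
    intro ε hε
    obtain ⟨hε0, hε1⟩ := hε
    have h1e : (0:ℝ) ≤ 1 - ε := by linarith
    have hind : (fun x => f x ^ s * f (x - ε) ^ (1 - s))
        = (Ioo ε 1).indicator (fun x => κ * x ^ a * (x - ε) ^ b) := by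
      funext x
      by_cases hx : x ∈ Ioo ε 1
      · rw [indicator_of_mem hx]
        obtain ⟨hx1, hx2⟩ := hx
        have hx0 : 0 < x := lt_trans hε0 hx1
        have hxe : 0 < x - ε := by linarith
        rw [hf x, hf (x - ε), if_pos ⟨hx0, hx2⟩,
          if_pos ⟨hxe, by linarith⟩]
        rw [Real.mul_rpow hκ0.le (Real.rpow_nonneg hx0.le _),
          Real.mul_rpow hκ0.le (Real.rpow_nonneg hxe.le _),
          ← Real.rpow_mul hx0.le, ← Real.rpow_mul hxe.le]
        have hκs : κ ^ s * κ ^ (1 - s) = κ := by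
          rw [← Real.rpow_add hκ0]; norm_num
        rw [show κ ^ s * x ^ ((κ - 1) * s) * (κ ^ (1 - s) * (x - ε) ^ ((κ - 1) * (1 - s)))
            = (κ ^ s * κ ^ (1 - s)) * x ^ ((κ - 1) * s) * (x - ε) ^ ((κ - 1) * (1 - s)) from
          by ring, hκs, ha, hb]
      · rw [indicator_of_notMem hx]
        simp only [mem_Ioo, not_and_or, not_lt] at hx
        rcases hx with hx | hx
        · have hnot : x - ε ∉ Ioo (0:ℝ) 1 := fun h => by
            have := h.1; linarith
          rw [hf (x - ε), if_neg hnot, Real.zero_rpow (by linarith : 1 - s ≠ 0), mul_zero]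
        · have hnot : x ∉ Ioo (0:ℝ) 1 := fun h => by
            have := h.2; linarith
          rw [hf x, if_neg hnot, Real.zero_rpow (by linarith : s ≠ 0), zero_mul]
    rw [hind, MeasureTheory.integral_indicator measurableSet_Ioo]
    rw [COV hκ0 hab hε0 hε1]
    rw [← MeasureTheory.integral_Ioc_eq_integral_Ioo, ← intervalIntegral.integral_of_le h1e]
    have hint1 : IntervalIntegrable (fun t : ℝ => (1 - t) ^ (-1 - κ)) volume 0 (1 - ε) := by
      apply ContinuousOn.intervalIntegrable
      rw [uIcc_of_le h1e]
      exact contOn_one_sub_rpow (by linarith)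
    have hint2 : IntervalIntegrable (fun t : ℝ => (1 - t ^ b) * (1 - t) ^ (-1 - κ))
        volume 0 (1 - ε) := by
      apply (hW2 hb1 hb0 hκ0 hκ1).mono_set
      rw [uIcc_of_le h1e, uIcc_of_le zero_le_one]
      exact Icc_subset_Icc le_rfl (by linarith)
    have hsplit : (∫ t in (0:ℝ)..(1 - ε), t ^ b * (1 - t) ^ (-1 - κ))
        = (∫ t in (0:ℝ)..(1 - ε), (1 - t) ^ (-1 - κ)) - F (1 - ε) := by
      rw [hF, ← intervalIntegral.integral_sub hint1 hint2]
      apply intervalIntegral.integral_congr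
      intro t _
      ring
    rw [hsplit, FTC1 hκ0 h1e (by linarith), show (1:ℝ) - (1 - ε) = ε from by ring]
    have hεκ : ε ^ κ * ε ^ (-κ) = 1 := by
      rw [← Real.rpow_add hε0]; norm_num
    have expand : κ * ε ^ κ * ((ε ^ (-κ) - 1) / κ - F (1 - ε))
        = ε ^ κ * ε ^ (-κ) - ε ^ κ - κ * ε ^ κ * F (1 - ε) := by
      field_simp
    rw [expand, hεκ]
    ring
  -- limits
  set G : ℝ → ℝ := fun ε => 1 + κ * F (1 - ε) with hG
  set d : ℝ → ℝ := fun ε => ε ^ κ * G ε with hd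
  have hGten : Tendsto G (nhdsWithin 0 (Ioi 0)) (nhds C) := by
    have hcont : ContinuousOn F (uIcc (0:ℝ) 1) :=
      intervalIntegral.continuousOn_primitive_interval' (hW2 hb1 hb0 hκ0 hκ1) left_mem_uIcc
    have h1 : Tendsto (fun ε : ℝ => 1 - ε) (nhdsWithin 0 (Ioi 0)) (nhdsWithin 1 (uIcc 0 1)) := by
      refine tendsto_nhdsWithin_iff.2 ⟨?_, ?_⟩
      · have hcc : Continuous (fun ε : ℝ => 1 - ε) := by fun_prop
        have h2 := hcc.tendsto (0:ℝ)
        norm_num at h2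
        exact h2.mono_left nhdsWithin_le_nhds
      · filter_upwards [Ioo_mem_nhdsGT_of_mem (left_mem_Ico.2 zero_lt_one)] with ε hε
        rw [uIcc_of_le zero_le_one]
        exact ⟨by linarith [hε.2], by linarith [hε.1]⟩
    have hF1 : Tendsto (fun ε => F (1 - ε)) (nhdsWithin 0 (Ioi 0)) (nhds (F 1)) :=
      ((hcont 1 right_mem_uIcc).tendsto).comp h1
    have h2 : Tendsto (fun ε : ℝ => 1 + κ * F (1 - ε)) (nhdsWithin 0 (Ioi 0))
        (nhds (1 + κ * F 1)) := tendsto_const_nhds.add (hF1.const_mul κ)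
    rw [← hCval]
    exact h2
  have hεκ0 : Tendsto (fun ε : ℝ => ε ^ κ) (nhdsWithin 0 (Ioi 0)) (nhds 0) := by
    have := (Real.continuousAt_rpow_const 0 κ (Or.inr hκ0.le)).tendsto
    rw [Real.zero_rpow hκ0.ne'] at this
    exact this.mono_left nhdsWithin_le_nhds
  have hd0 : Tendsto d (nhdsWithin 0 (Ioi 0)) (nhds 0) := by
    have := hεκ0.mul hGten
    simpa using this
  have hdsmall : ∀ᶠ ε in nhdsWithin 0 (Ioi 0), |d ε| ≤ 1/2 := by
    have := Metric.tendsto_nhds.mp hd0 (1/2) (by norm_num)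
    filter_upwards [this] with ε hε
    rw [Real.dist_eq, sub_zero] at hε
    linarith
  have herr : Tendsto (fun ε => (-(Real.log (1 - d ε)) - d ε) / ε ^ κ)
      (nhdsWithin 0 (Ioi 0)) (nhds 0) := by
    apply squeeze_zero_norm' (a := fun ε => 2 * ε ^ κ * (G ε) ^ 2)
    · filter_upwards [hdsmall, self_mem_nhdsWithin] with ε hdε hε
      have hεpos : (0:ℝ) < ε := hε
      have hεκpos : 0 < ε ^ κ := Real.rpow_pos_of_pos hεpos κ
      have hlog := Real.abs_log_sub_add_sum_range_le (show |d ε| < 1 by linarith) 1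
      simp only [Finset.sum_range_one, pow_one, Nat.cast_zero, zero_add, div_one] at hlog
      have h2 : |Real.log (1 - d ε) + d ε| ≤ 2 * (d ε) ^ 2 := by
        have h3 : (1:ℝ)/2 ≤ 1 - |d ε| := by linarith
        calc |Real.log (1 - d ε) + d ε| = |d ε + Real.log (1 - d ε)| := by rw [add_comm]
          _ ≤ |d ε| ^ 2 / (1 - |d ε|) := by
              have h' := hlog
              norm_num at h' ⊢
              try convert h' using 2
              try norm_num
          _ ≤ |d ε| ^ 2 / (1/2) := by
              apply div_le_div_of_nonneg_left (by positivity) (by norm_num) h3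
          _ = 2 * (d ε) ^ 2 := by rw [sq_abs]; ring
      calc ‖(-(Real.log (1 - d ε)) - d ε) / ε ^ κ‖
          = |Real.log (1 - d ε) + d ε| / ε ^ κ := by
            rw [Real.norm_eq_abs, abs_div, abs_of_pos hεκpos,
              show -(Real.log (1 - d ε)) - d ε = -(Real.log (1 - d ε) + d ε) from by ring,
              abs_neg]
        _ ≤ (2 * (d ε) ^ 2) / ε ^ κ := (div_le_div_iff_of_pos_right hεκpos).2 h2
        _ = 2 * ε ^ κ * (G ε) ^ 2 := by
            rw [hd]
            field_simp
    · have h5 : Tendsto (fun ε => (2 * ε ^ κ) * (G ε * G ε)) (nhdsWithin 0 (Ioi 0))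
          (nhds ((2 * 0) * (C * C))) := (hεκ0.const_mul 2).mul (hGten.mul hGten)
      norm_num at h5
      exact h5.congr (fun ε => by ring)
  have hsum : Tendsto (fun ε => G ε + (-(Real.log (1 - d ε)) - d ε) / ε ^ κ)
      (nhdsWithin 0 (Ioi 0)) (nhds C) := by
    have := hGten.add herr
    simpa using this
  apply hsum.congr'
  filter_upwards [Ioo_mem_nhdsGT_of_mem (left_mem_Ico.2 zero_lt_one)] with ε hε
  have hεκpos : 0 < ε ^ κ := Real.rpow_pos_of_pos hε.1 κ
  have hkey := key ε hε
  simp only [renyi]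
  rw [hkey]
  rw [show ε ^ κ * (1 + κ * F (1 - ε)) = d ε from rfl]
  field_simp
  ring
end
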